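/- arXiv:1804.05856 — 9 statements merged into one kernel-verified Lean document; each statement's English description precedes it below -/
import Mathlib

section
/- For any Hermitian matrix A and any subset of indexed Hermitian matrices, the maximum over unit vectors ψ of ∑_i |⟨ψ| A_i |ψ⟩|, where A_i are Hermitian with ∑_i A_i = 0, equals 2 · max over subsets Δ of the largest eigenvalue of ∑_{i∈Δ} A_i (when this maximum is nonnegative). -/
/-!
For a unit vector `ψ` the numbers `xᵢ = ⟨ψ|Aᵢ|ψ⟩` are real and sum to zero, so
`∑ |xᵢ| = 2 ∑_{i ∈ Δ} xᵢ` for `Δ = {i | 0 ≤ xᵢ}`, while `2 ∑_{i ∈ Δ} xᵢ ≤ ∑ |xᵢ|` for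
every `Δ`. Since `∑_{i ∈ Δ} xᵢ = ⟨ψ|∑_{i ∈ Δ} Aᵢ|ψ⟩ ≤ λ_max(∑_{i ∈ Δ} Aᵢ)`, this bounds
`∑ |xᵢ|` by `2 max_Δ λ_max`, and a top eigenvector of the optimal `∑_{i ∈ Δ} Aᵢ` attains
the bound.
-/

open Finset Matrix

section ZeroSum

variable {ι : Type*} [Fintype ι] {x : ι → ℝ}

lemma two_mul_sum_le_sum_abs_of_sum_eq_zero (hx : ∑ i, x i = 0) (s : Finset ι) :
    2 * ∑ i ∈ s, x i ≤ ∑ i, |x i| := by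
  classical
  have hs : ∑ i ∈ s, x i ≤ ∑ i ∈ s, |x i| := sum_le_sum fun i _ => le_abs_self (x i)
  have hsc : -∑ i ∈ sᶜ, x i ≤ ∑ i ∈ sᶜ, |x i| := by
    rw [← sum_neg_distrib]
    exact sum_le_sum fun i _ => neg_le_abs (x i)
  linarith [sum_add_sum_compl s x, sum_add_sum_compl s fun i => |x i|]

lemma sum_abs_eq_two_mul_sum_filter_nonneg_of_sum_eq_zero (hx : ∑ i, x i = 0) :
    ∑ i, |x i| = 2 * ∑ i with 0 ≤ x i, x i := by
  have hpos : ∑ i with 0 ≤ x i, |x i| = ∑ i with 0 ≤ x i, x i :=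
    sum_congr rfl fun i hi => abs_of_nonneg (mem_filter.mp hi).2
  have hneg : ∑ i with ¬0 ≤ x i, |x i| = -∑ i with ¬0 ≤ x i, x i := by
    rw [← sum_neg_distrib]
    exact sum_congr rfl fun i hi => abs_of_neg (not_le.mp (mem_filter.mp hi).2)
  rw [← sum_filter_add_sum_filter_not univ (fun i => 0 ≤ x i)] at hx ⊢
  linarith

end ZeroSum

section Expectation

variable {m ι : Type*} [Fintype m]

lemma Matrix.IsHermitian.abs_re_star_dotProduct_mulVec_self {A : Matrix m m ℂ}
    (hA : A.IsHermitian) (ψ : m → ℂ) :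
    |(star ψ ⬝ᵥ A *ᵥ ψ).re| = ‖star ψ ⬝ᵥ A *ᵥ ψ‖ :=
  Complex.abs_re_eq_norm.mpr (hA.im_star_dotProduct_mulVec_self ψ)

lemma ofReal_sum_re_star_dotProduct_mulVec {A : ι → Matrix m m ℂ}
    (hA : ∀ i, (A i).IsHermitian) (ψ : m → ℂ) (s : Finset ι) :
    ((∑ i ∈ s, (star ψ ⬝ᵥ A i *ᵥ ψ).re : ℝ) : ℂ) = star ψ ⬝ᵥ (∑ i ∈ s, A i) *ᵥ ψ := by
  rw [sum_mulVec, dotProduct_sum, Complex.ofReal_sum]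
  refine sum_congr rfl fun i _ => Complex.ext rfl ?_
  simpa using ((hA i).im_star_dotProduct_mulVec_self ψ).symm

end Expectation

theorem stmt2 (d n : ℕ) (A : Fin n → Matrix (Fin d) (Fin d) ℂ)
    (hA : ∀ i, (A i).IsHermitian) (hsum : ∑ i, A i = 0)
    (lam : Finset (Fin n) → ℝ)
    -- `lam Δ` is the largest eigenvalue of `∑ i in Δ, A i`, characterized by the
    -- Rayleigh quotient principle
    (hlam : ∀ Δ : Finset (Fin n),
      IsGreatest {t : ℝ | ∃ ψ : Fin d → ℂ, star ψ ⬝ᵥ ψ = 1 ∧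
        star ψ ⬝ᵥ (∑ i ∈ Δ, A i).mulVec ψ = (t : ℂ)} (lam Δ)) :
    IsGreatest
      {s : ℝ | ∃ ψ : Fin d → ℂ, star ψ ⬝ᵥ ψ = 1 ∧
        s = ∑ i, ‖star ψ ⬝ᵥ (A i).mulVec ψ‖}
      (2 * Finset.univ.powerset.sup' (by simp) lam) := by
  set M := univ.powerset.sup' (by simp) lam
  set x : (Fin d → ℂ) → Fin n → ℝ := fun ψ i => (star ψ ⬝ᵥ A i *ᵥ ψ).re
  have hrayleigh := ofReal_sum_re_star_dotProduct_mulVec hA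
  have hnorm (ψ) : ∑ i, ‖star ψ ⬝ᵥ A i *ᵥ ψ‖ = ∑ i, |x ψ i| :=
    sum_congr rfl fun i _ => ((hA i).abs_re_star_dotProduct_mulVec_self ψ).symm
  have hzero (ψ) : ∑ i, x ψ i = 0 := by
    have h := hrayleigh ψ univ
    rw [hsum, zero_mulVec, dotProduct_zero] at h
    exact_mod_cast h
  have hupper (ψ) (hψ : star ψ ⬝ᵥ ψ = 1) : ∑ i, ‖star ψ ⬝ᵥ A i *ᵥ ψ‖ ≤ 2 * M := by
    rw [hnorm, sum_abs_eq_two_mul_sum_filter_nonneg_of_sum_eq_zero (hzero ψ)]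
    have hlam_le := (hlam _).2 ⟨ψ, hψ, (hrayleigh ψ {i | 0 ≤ x ψ i}).symm⟩
    have hle_M := le_sup' lam (mem_powerset.mpr (subset_univ {i | 0 ≤ x ψ i}))
    linarith
  refine ⟨?_, fun s ⟨ψ, hψ, hs⟩ => hs ▸ hupper ψ hψ⟩
  obtain ⟨Δ, -, hΔ⟩ := exists_mem_eq_sup' (powerset_nonempty _) lam
  obtain ⟨ψ, hψ, hval⟩ := (hlam Δ).1
  have hM : M = ∑ i ∈ Δ, x ψ i := hΔ.trans <| by
    exact_mod_cast hval.symm.trans (hrayleigh ψ Δ).symm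
  refine ⟨ψ, hψ, le_antisymm ?_ (hupper ψ hψ)⟩
  rw [hnorm, hM]
  exact two_mul_sum_le_sum_abs_of_sum_eq_zero (hzero ψ) Δ
end

section
/- Let U be a d×d unitary matrix with columns u_i = U|i⟩. Then there exists a unit vector ψ with ∑_i |⟨ψ|(|i⟩⟨i| − |u_i⟩⟨u_i|)|ψ⟩| = 2 if and only if there exists a nonempty proper subset Δ of {1,...,d} such that the principal submatrix U_Δ = (U_{ij})_{i,j∈Δ} is singular (rank-deficient). -/
/-!
Write φ = U†ψ. The i-th summand is | |ψ_i|² − |φ_i|² |, and since U is unitary both (|ψ_i|²) and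
(|φ_i|²) are probability vectors, so the sum is 2 exactly when ψ and φ have disjoint supports.
If Δ is the support of ψ, this says that (U_Δ)† kills the nonzero vector ψ|_Δ; conversely a kernel
vector of (U_Δ)†, extended by zero and normalized, is such a ψ.
-/

open Finset Matrix

lemma abs_sub_eq_add_iff_of_nonneg {a b : ℝ} (ha : 0 ≤ a) (hb : 0 ≤ b) :
    |a - b| = a + b ↔ a = 0 ∨ b = 0 := by
  constructor
  · intro h
    rcases abs_cases (a - b) with ⟨h1, _⟩ | ⟨h1, _⟩
    · right; linarith
    · left; linarith
  · rintro (rfl | rfl) <;> simp [abs_of_nonneg, ha, hb]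

lemma sum_abs_sub_eq_two_iff {ι : Type*} [Fintype ι] {a b : ι → ℝ} (ha : 0 ≤ a) (hb : 0 ≤ b)
    (ha1 : ∑ i, a i = 1) (hb1 : ∑ i, b i = 1) :
    ∑ i, |a i - b i| = 2 ↔ ∀ i, a i = 0 ∨ b i = 0 := by
  have hle : ∀ i ∈ univ, |a i - b i| ≤ a i + b i := fun i _ => by
    simpa [abs_of_nonneg (ha i), abs_of_nonneg (hb i)] using abs_sub (a i) (b i)
  rw [show (2 : ℝ) = ∑ i, (a i + b i) by rw [sum_add_distrib, ha1, hb1]; norm_num,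
    sum_eq_sum_iff_of_le hle]
  simp only [mem_univ, true_implies]
  exact forall_congr' fun i => abs_sub_eq_add_iff_of_nonneg (ha i) (hb i)

namespace Matrix

section Field
variable {K ι : Type*} [Field K] [Fintype ι]

lemma submatrix_mulVec_restrict (M : Matrix ι ι K) {Δ : Finset ι} {v : ι → K}
    (hv : ∀ i ∉ Δ, v i = 0) (i : Δ) :
    (M.submatrix ((↑) : Δ → ι) (↑) *ᵥ fun k : Δ => v k) i = (M *ᵥ v) i := by
  simp only [mulVec, dotProduct, submatrix_apply]
  rw [sum_coe_sort Δ fun k => M i k * v k]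
  exact sum_subset (subset_univ Δ) fun k _ hk => by simp [hv k hk]

lemma det_submatrix_eq_zero_iff_exists_mulVec [DecidableEq ι] (M : Matrix ι ι K) (Δ : Finset ι) :
    (M.submatrix ((↑) : Δ → ι) (↑)).det = 0 ↔
      ∃ v ≠ 0, (∀ i ∉ Δ, v i = 0) ∧ ∀ i ∈ Δ, (M *ᵥ v) i = 0 := by
  rw [← exists_mulVec_eq_zero_iff]
  constructor
  · rintro ⟨w, hw0, hw⟩
    set v : ι → K := fun k => if h : k ∈ Δ then w ⟨k, h⟩ else 0
    have hvΔ : ∀ i ∉ Δ, v i = 0 := fun i hi => dif_neg hi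
    have hw_eq : (fun k : Δ => v k) = w := funext fun k => dif_pos k.2
    refine ⟨v, fun h => hw0 ?_, hvΔ, fun i hi => ?_⟩
    · rw [← hw_eq, h]; rfl
    · rw [← submatrix_mulVec_restrict M hvΔ ⟨i, hi⟩, hw_eq, hw]; rfl
  · rintro ⟨v, hv0, hvΔ, hMv⟩
    refine ⟨fun k : Δ => v k, fun h => hv0 (funext fun i => ?_), funext fun i => ?_⟩
    · by_cases hi : i ∈ Δ
      · exact congrFun h ⟨i, hi⟩
      · exact hvΔ i hi
    · rw [submatrix_mulVec_restrict M hvΔ i, hMv i i.2]; rfl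

lemma det_submatrix_eq_zero_iff_exists_conjTranspose_mulVec [StarRing K] [DecidableEq ι]
    (M : Matrix ι ι K) (Δ : Finset ι) :
    (M.submatrix ((↑) : Δ → ι) (↑)).det = 0 ↔
      ∃ v ≠ 0, (∀ i ∉ Δ, v i = 0) ∧ ∀ i ∈ Δ, (Mᴴ *ᵥ v) i = 0 := by
  rw [← star_eq_zero, ← det_conjTranspose, conjTranspose_submatrix,
    det_submatrix_eq_zero_iff_exists_mulVec]

end Field

lemma star_conjTranspose_mulVec_dotProduct {α ι : Type*} [CommRing α] [StarRing α] [Fintype ι]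
    [DecidableEq ι] {U : Matrix ι ι α} (hU : U ∈ unitaryGroup ι α) (ψ : ι → α) :
    star (Uᴴ *ᵥ ψ) ⬝ᵥ (Uᴴ *ᵥ ψ) = star ψ ⬝ᵥ ψ := by
  rw [star_mulVec, conjTranspose_conjTranspose, dotProduct_mulVec, vecMul_vecMul,
    ← star_eq_conjTranspose, mem_unitaryGroup_iff.mp hU, vecMul_one]

section RCLike
variable {𝕜 ι : Type*} [RCLike 𝕜] [Fintype ι]

lemma star_dotProduct_self_eq_sum_norm_sq (ψ : ι → 𝕜) :
    star ψ ⬝ᵥ ψ = ((∑ i, ‖ψ i‖ ^ 2 : ℝ) : 𝕜) := by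
  push_cast
  exact sum_congr rfl fun i _ => RCLike.conj_mul (ψ i)

lemma sum_norm_sq_eq_one {ψ : ι → 𝕜} (hψ : star ψ ⬝ᵥ ψ = 1) : ∑ i, ‖ψ i‖ ^ 2 = 1 := by
  exact_mod_cast (star_dotProduct_self_eq_sum_norm_sq ψ).symm.trans hψ

lemma exists_smul_star_dotProduct_self_eq_one {ψ : ι → 𝕜} (hψ : ψ ≠ 0) :
    ∃ c : 𝕜, star (c • ψ) ⬝ᵥ (c • ψ) = 1 := by
  set n := ∑ i, ‖ψ i‖ ^ 2
  have hn : 0 < n := by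
    obtain ⟨i, hi⟩ := Function.ne_iff.mp hψ
    exact sum_pos' (fun i _ => by positivity) ⟨i, mem_univ i, pow_pos (norm_pos_iff.mpr hi) 2⟩
  refine ⟨((√n)⁻¹ : ℝ), ?_⟩
  rw [star_smul, smul_dotProduct, dotProduct_smul, star_dotProduct_self_eq_sum_norm_sq]
  simp only [RCLike.star_def, RCLike.conj_ofReal, smul_eq_mul]
  norm_cast
  field_simp
  exact (Real.sq_sqrt hn.le).symm

lemma star_dotProduct_single_sub_vecMulVec_mulVec [DecidableEq ι] (ψ u : ι → 𝕜) (i : ι) :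
    star ψ ⬝ᵥ (single i i (1 : 𝕜) - vecMulVec u (star u)) *ᵥ ψ
      = ((‖ψ i‖ ^ 2 - ‖star u ⬝ᵥ ψ‖ ^ 2 : ℝ) : 𝕜) := by
  rw [sub_mulVec, dotProduct_sub, single_mulVec_eq, vecMulVec_mulVec, op_smul_eq_smul,
    dotProduct_smul, dotProduct_smul, dotProduct_single, star_dotProduct]
  simp only [Pi.star_apply, RCLike.star_def, smul_eq_mul, one_mul, mul_one, RCLike.mul_conj]
  push_cast
  rw [RCLike.conj_mul, RCLike.norm_conj]

lemma sum_norm_projector_difference_eq_two_iff [DecidableEq ι] {U : Matrix ι ι 𝕜}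
    (hU : U ∈ unitaryGroup ι 𝕜) {ψ : ι → 𝕜} (hψ : star ψ ⬝ᵥ ψ = 1) :
    ∑ i, ‖star ψ ⬝ᵥ
        (single i i (1 : 𝕜) - vecMulVec (fun k => U k i) (star fun k => U k i)) *ᵥ ψ‖ = 2 ↔
      ∀ i, ψ i = 0 ∨ (Uᴴ *ᵥ ψ) i = 0 := by
  have hφ : star (Uᴴ *ᵥ ψ) ⬝ᵥ (Uᴴ *ᵥ ψ) = 1 := (star_conjTranspose_mulVec_dotProduct hU ψ).trans hψ
  have hterm : ∀ i, ‖star ψ ⬝ᵥ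
      (single i i (1 : 𝕜) - vecMulVec (fun k => U k i) (star fun k => U k i)) *ᵥ ψ‖ =
        |‖ψ i‖ ^ 2 - ‖(Uᴴ *ᵥ ψ) i‖ ^ 2| := fun i => by
    rw [star_dotProduct_single_sub_vecMulVec_mulVec, RCLike.norm_ofReal]
    rfl
  rw [sum_congr rfl fun i _ => hterm i, sum_abs_sub_eq_two_iff (fun i => by positivity)
    (fun i => by positivity) (sum_norm_sq_eq_one hψ) (sum_norm_sq_eq_one hφ)]
  simp only [ne_eq, OfNat.ofNat_ne_zero, not_false_eq_true, pow_eq_zero_iff, norm_eq_zero]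

end RCLike

end Matrix

theorem stmt3 (d : ℕ) (U : Matrix (Fin d) (Fin d) ℂ)
    (hU : U ∈ Matrix.unitaryGroup (Fin d) ℂ) :
    (∃ ψ : Fin d → ℂ, star ψ ⬝ᵥ ψ = 1 ∧
      ∑ i, ‖star ψ ⬝ᵥ
        (Matrix.single i i (1 : ℂ) -
          Matrix.vecMulVec (fun k => U k i) (star (fun k => U k i))).mulVec ψ‖ = 2)
    ↔ (∃ Δ : Finset (Fin d), Δ.Nonempty ∧ Δ ≠ Finset.univ ∧
        (U.submatrix (fun i : Δ => (i : Fin d)) (fun j : Δ => (j : Fin d))).det = 0) := by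
  constructor
  · rintro ⟨ψ, hψ, hsum⟩
    have hdisj := (sum_norm_projector_difference_eq_two_iff hU hψ).mp hsum
    have hψ0 : ψ ≠ 0 := by rintro rfl; simp at hψ
    have hφ0 : Uᴴ *ᵥ ψ ≠ 0 := by
      intro h
      rw [← star_conjTranspose_mulVec_dotProduct hU, h] at hψ
      simp at hψ
    obtain ⟨i, hi⟩ := Function.ne_iff.mp hψ0
    obtain ⟨j, hj⟩ := Function.ne_iff.mp hφ0
    refine ⟨univ.filter (ψ · ≠ 0), ⟨i, by simpa using hi⟩, fun hΔ => hj ?_,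
      (det_submatrix_eq_zero_iff_exists_conjTranspose_mulVec U _).mpr
        ⟨ψ, hψ0, fun k hk => by simpa using hk,
          fun k hk => (hdisj k).resolve_left (by simpa using hk)⟩⟩
    have hj' : j ∈ univ.filter (ψ · ≠ 0) := by rw [hΔ]; exact mem_univ j
    exact (hdisj j).resolve_left (by simpa using hj')
  · rintro ⟨Δ, -, -, hdet⟩
    obtain ⟨v, hv0, hvΔc, hvΔ⟩ :=
      (det_submatrix_eq_zero_iff_exists_conjTranspose_mulVec U Δ).mp hdet
    obtain ⟨c, hc⟩ := exists_smul_star_dotProduct_self_eq_one hv0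
    refine ⟨c • v, hc, (sum_norm_projector_difference_eq_two_iff hU hc).mpr fun i => ?_⟩
    by_cases hi : i ∈ Δ
    · right; rw [mulVec_smul, Pi.smul_apply, hvΔ i hi, smul_zero]
    · left; rw [Pi.smul_apply, hvΔc i hi, smul_zero]
end

section
/- Let U be a d×d unitary matrix and E a diagonal unitary matrix chosen so that all diagonal entries of UE are nonnegative reals. If there exists a density matrix ρ with diag(U†ρ) = 0, then Tr(UE) ≤ d − 2. -/
/-! Put `V = U E`, a unitary with `Tr (V† ρ) = 0`. In an orthonormal eigenbasis of `V` this says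
that `0` is a convex combination `∑ q_k λ̄_k` of the conjugate eigenvalues, which lie on the unit
circle, while `d - Re Tr V = ∑ (1 - Re λ_k)`. If that sum were below `2`, some `λ_j` with
`Re λ_j ≤ 0` would carry weight and every other eigenvalue would satisfy `Re λ_k > |Re λ_j|`; the
line through `0` and `λ_j` then has all other eigenvalues strictly on one side, so the
combination could only vanish if all weight sat on `λ_j ≠ 0`. -/

open Matrix Finset ComplexConjugate
open scoped ComplexOrder ComplexStarModule

open Module.End in
theorem LinearMap.IsSymmetric.exists_orthonormalBasis_apply_eq_smul_of_commute
    {𝕜 E : Type*} [RCLike 𝕜] [NormedAddCommGroup E] [InnerProductSpace 𝕜 E]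
    [FiniteDimensional 𝕜 E] {A B : E →ₗ[𝕜] E}
    (hA : A.IsSymmetric) (hB : B.IsSymmetric) (hAB : Commute A B) :
    ∃ (b : OrthonormalBasis (Fin (Module.finrank 𝕜 E)) 𝕜 E) (α β : Fin (Module.finrank 𝕜 E) → 𝕜),
      ∀ i, A (b i) = α i • b i ∧ B (b i) = β i • b i := by
  classical
  set J : 𝕜 × 𝕜 → Submodule 𝕜 E := fun p => eigenspace A p.2 ⊓ eigenspace B p.1
  have horth := hA.orthogonalFamily_eigenspace_inf_eigenspace hB
  let := horth.independent.fintypeNeBotOfFiniteDimensional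
  have horth' : OrthogonalFamily 𝕜 (fun p : {p // J p ≠ ⊥} => J p) fun p => (J p).subtypeₗᵢ :=
    horth.comp Subtype.val_injective
  have hint : DirectSum.IsInternal fun p : {p // J p ≠ ⊥} => J p := by
    rw [horth'.isInternal_iff, iSup_ne_bot_subtype J, ← horth.isInternal_iff]
    exact hA.directSum_isInternal_of_commute hB hAB
  refine ⟨hint.subordinateOrthonormalBasis rfl horth',
    fun i => (hint.subordinateOrthonormalBasisIndex rfl i horth').1.2,
    fun i => (hint.subordinateOrthonormalBasisIndex rfl i horth').1.1, fun i => ?_⟩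
  have hmem := hint.subordinateOrthonormalBasis_subordinate rfl i horth'
  exact ⟨mem_eigenspace_iff.mp hmem.1, mem_eigenspace_iff.mp hmem.2⟩

theorem Matrix.exists_unitary_diagonalization_of_isStarNormal {n : Type*} [Fintype n]
    [DecidableEq n] (N : Matrix n n ℂ) [IsStarNormal N] :
    ∃ W ∈ unitaryGroup n ℂ, ∃ μ : n → ℂ, N = W * diagonal μ * Wᴴ := by
  have hsymm (M : selfAdjoint (Matrix n n ℂ)) : (toEuclideanLin (M : Matrix n n ℂ)).IsSymmetric :=
    isSymmetric_toEuclideanLin_iff.mpr M.2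
  obtain ⟨b, α, β, hb⟩ := (hsymm (ℜ N)).exists_orthonormalBasis_apply_eq_smul_of_commute
    (hsymm (ℑ N)) ((Commute.realPart_imaginaryPart N).map (toLpLinAlgEquiv 2))
  let e : Fin (Module.finrank ℂ (EuclideanSpace ℂ n)) ≃ n := Fintype.equivOfCardEq (by simp)
  have hN : toEuclideanLin N =
      toEuclideanLin (ℜ N : Matrix n n ℂ) + Complex.I • toEuclideanLin (ℑ N : Matrix n n ℂ) := by
    rw [← map_smul, ← map_add, realPart_add_I_smul_imaginaryPart]
  set c := b.reindex e
  set μ : n → ℂ := fun i => α (e.symm i) + Complex.I * β (e.symm i)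
  have hc (i : n) : N *ᵥ c i = μ i • c i := by
    obtain ⟨hα, hβ⟩ := hb (e.symm i)
    have : toEuclideanLin N (c i) = μ i • c i := by
      rw [hN, LinearMap.add_apply, LinearMap.smul_apply, b.reindex_apply, hα, hβ, smul_smul,
        add_smul]
    simpa [toLpLin_apply] using congrArg WithLp.ofLp this
  set W := (EuclideanSpace.basisFun n ℂ).toBasis.toMatrix c.toBasis
  have hW : W ∈ unitaryGroup n ℂ :=
    (EuclideanSpace.basisFun n ℂ).toMatrix_orthonormalBasis_mem_unitary c
  refine ⟨W, hW, μ, ?_⟩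
  have : N * W = W * diagonal μ := by
    ext i j
    have hWij (k l : n) : W k l = c l k := rfl
    have hcol := congrFun (hc j) i
    simp only [mulVec, dotProduct, Pi.smul_apply, smul_eq_mul] at hcol
    rw [mul_diagonal, Matrix.mul_apply]
    simp only [hWij, hcol, mul_comm]
  rw [← this, Matrix.mul_assoc, ← star_eq_conjTranspose, (mem_unitaryGroup_iff.mp hW), mul_one]

theorem Matrix.exists_unitary_diagonalization_of_mem_unitaryGroup {n : Type*} [Fintype n]
    [DecidableEq n] {V : Matrix n n ℂ} (hV : V ∈ unitaryGroup n ℂ) :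
    ∃ W ∈ unitaryGroup n ℂ, ∃ μ : n → ℂ, (∀ k, ‖μ k‖ = 1) ∧ V = W * diagonal μ * Wᴴ := by
  have := isStarNormal_of_mem_unitary hV
  obtain ⟨W, hW, μ, rfl⟩ := V.exists_unitary_diagonalization_of_isStarNormal
  have hWW : Wᴴ * W = 1 := mem_unitaryGroup_iff'.mp hW
  refine ⟨W, hW, μ, fun k => ?_, rfl⟩
  have hD : diagonal μ ∈ unitaryGroup n ℂ := by
    have : diagonal μ = Wᴴ * (W * diagonal μ * Wᴴ) * W := by
      simp only [← Matrix.mul_assoc, hWW, one_mul]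
      rw [Matrix.mul_assoc, hWW, mul_one]
    rw [this]
    exact mul_mem (mul_mem (Unitary.star_mem hW) hV) hW
  have := congrFun (congrFun (mem_unitaryGroup_iff'.mp hD) k) k
  rw [star_eq_conjTranspose, diagonal_conjTranspose, diagonal_mul_diagonal, diagonal_apply_eq,
    one_apply_eq, Pi.star_apply, Complex.star_def, Complex.conj_mul'] at this
  exact (pow_eq_one_iff_of_nonneg (norm_nonneg _) two_ne_zero).mp (by exact_mod_cast this)

theorem Complex.im_mul_im_mul_conj_pos {u v : ℂ} (hu : ‖u‖ = 1) (hv : ‖v‖ = 1) (hu0 : u.re ≤ 0)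
    (huv : -u.re < v.re) : 0 < u.im * (u * conj v).im := by
  have hu2 := Complex.normSq_eq_norm_sq u
  have hv2 := Complex.normSq_eq_norm_sq v
  rw [Complex.normSq_apply, hu] at hu2
  rw [Complex.normSq_apply, hv] at hv2
  simp only [Complex.mul_im, Complex.conj_re, Complex.conj_im]
  have hre : u.re ^ 2 < v.re ^ 2 := by nlinarith
  have him : v.im ^ 2 < u.im ^ 2 := by nlinarith
  nlinarith [mul_nonneg (neg_nonneg.mpr hu0) (sq_nonneg (u.im + v.im)),
    mul_nonneg (neg_nonneg.mpr hu0) (sub_nonneg.mpr him.le),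
    mul_pos ((sq_nonneg v.im).trans_lt him) (neg_lt_iff_pos_add.mp huv)]

theorem two_le_sum_one_sub_re_of_sum_smul_eq_zero {ι : Type*} [Fintype ι]
    (z : ι → ℂ) (hz : ∀ k, ‖z k‖ = 1) (w : ι → ℝ) (hw : ∀ k, 0 ≤ w k) (hw1 : ∑ k, w k = 1)
    (hwz : ∑ k, w k • z k = 0) :
    2 ≤ ∑ k, (1 - (z k).re) := by
  classical
  have hre : ∑ k, w k * (z k).re = 0 := by simpa using congrArg Complex.re hwz
  have him : ∑ k, w k * (z k).im = 0 := by simpa using congrArg Complex.im hwz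
  have hdef (k : ι) : 0 ≤ 1 - (z k).re := by linarith [Complex.re_le_norm (z k), hz k]
  by_contra! hlt
  obtain ⟨j, hwj, hj⟩ : ∃ j, 0 < w j ∧ (z j).re ≤ 0 := by
    by_contra! h
    obtain ⟨k, hk⟩ : ∃ k, 0 < w k := by
      by_contra! h'
      linarith [sum_nonpos fun k (_ : k ∈ univ) => h' k]
    have : 0 < ∑ k, w k * (z k).re :=
      sum_pos' (fun k _ => (hw k).eq_or_lt.elim (fun h0 => by simp [← h0])
        fun h0 => (mul_pos h0 (h k h0)).le) ⟨k, mem_univ k, mul_pos hk (h k hk)⟩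
    linarith
  have hfar (k : ι) (hk : k ≠ j) : -(z j).re < (z k).re := by
    have := sum_le_sum_of_subset_of_nonneg (subset_univ {j, k}) fun l _ _ => hdef l
    rw [sum_pair hk.symm] at this
    linarith
  -- up to the factor `|Im (z j)|`, `ℓ v` is the signed distance of `v` from the line `ℝ • z j`
  set ℓ : ℂ → ℝ := fun v => (z j).im * (z j * conj v).im
  have hℓ : ∑ k, w k * ℓ (z k) = 0 := by
    have : ∑ k, w k * ℓ (z k) =
        (z j).im * ((z j).im * ∑ k, w k * (z k).re - (z j).re * ∑ k, w k * (z k).im) := by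
      simp only [mul_sum, ← sum_sub_distrib]
      refine sum_congr rfl fun k _ => ?_
      simp only [ℓ, Complex.mul_im, Complex.conj_re, Complex.conj_im]
      ring
    rw [this, hre, him]
    ring
  have hℓpos (k : ι) (hk : k ≠ j) : 0 < ℓ (z k) :=
    Complex.im_mul_im_mul_conj_pos (hz j) (hz k) hj (hfar k hk)
  have hterm (k : ι) : 0 ≤ w k * ℓ (z k) := by
    rcases eq_or_ne k j with rfl | hk
    · simp only [ℓ, Complex.mul_conj, Complex.ofReal_im, mul_zero, le_refl]
    · exact mul_nonneg (hw k) (hℓpos k hk).le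
  have hwk (k : ι) (hk : k ≠ j) : w k = 0 := by
    have := (sum_eq_zero_iff_of_nonneg fun k _ => hterm k).mp hℓ k (mem_univ k)
    exact (mul_eq_zero.mp this).resolve_right (hℓpos k hk).ne'
  have : w j = 1 := by rwa [Fintype.sum_eq_single j hwk] at hw1
  rw [Fintype.sum_eq_single j fun k hk => by simp [hwk k hk], this, one_smul] at hwz
  simpa [hwz] using hz j

theorem Matrix.re_trace_le_card_sub_two_of_trace_conjTranspose_mul_eq_zero {n : Type*}
    [Fintype n] [DecidableEq n] {V ρ : Matrix n n ℂ} (hV : V ∈ unitaryGroup n ℂ)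
    (hρ : ρ.PosSemidef) (hρtr : ρ.trace = 1) (h : (Vᴴ * ρ).trace = 0) :
    V.trace.re ≤ Fintype.card n - 2 := by
  obtain ⟨W, hW, μ, hμ, rfl⟩ := exists_unitary_diagonalization_of_mem_unitaryGroup hV
  have hWW : Wᴴ * W = 1 := mem_unitaryGroup_iff'.mp hW
  set σ := Wᴴ * ρ * W
  have hσ : σ.PosSemidef := hρ.conjTranspose_mul_mul_same W
  have hσ_re (k : n) : σ k k = ((σ k k).re : ℂ) :=
    Complex.eq_re_of_ofReal_le (r := 0) (by simpa using hσ.diag_nonneg)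
  have hσtr : ∑ k, (σ k k).re = 1 := by
    have : σ.trace = 1 := by
      rw [trace_mul_cycle, ← star_eq_conjTranspose, mem_unitaryGroup_iff.mp hW, one_mul, hρtr]
    simpa [trace, Complex.re_sum] using congrArg Complex.re this
  have hwz : ∑ k, (σ k k).re • star (μ k) = 0 := by
    have : (W * diagonal μ * Wᴴ)ᴴ * ρ = W * (diagonal (star μ) * Wᴴ * ρ) := by
      simp only [conjTranspose_mul, conjTranspose_conjTranspose, diagonal_conjTranspose,
        Matrix.mul_assoc]
    have hσ' : diagonal (star μ) * Wᴴ * ρ * W = diagonal (star μ) * σ := by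
      simp only [σ, Matrix.mul_assoc]
    rw [← h, this, trace_mul_comm, hσ', trace]
    refine sum_congr rfl fun k _ => ?_
    rw [diag_apply, diagonal_mul, hσ_re k, Complex.real_smul, mul_comm, Pi.star_apply,
      Complex.ofReal_re]
  have := two_le_sum_one_sub_re_of_sum_smul_eq_zero (fun k => star (μ k)) (by simpa using hμ)
    (fun k => (σ k k).re) (fun k => (Complex.nonneg_iff.mp hσ.diag_nonneg).1) hσtr hwz
  rw [trace_mul_cycle, hWW, one_mul, trace_diagonal, Complex.re_sum]
  simp only [Complex.star_def, Complex.conj_re, sum_sub_distrib, sum_const, card_univ,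
    nsmul_eq_mul, mul_one] at this
  linarith

theorem Matrix.trace_mul_eq_zero_of_isDiag {n α : Type*} [Fintype n] [NonUnitalNonAssocSemiring α]
    {D M : Matrix n n α} (hD : D.IsDiag) (hM : ∀ i, M i i = 0) : (D * M).trace = 0 := by
  refine sum_eq_zero fun i _ => ?_
  rw [diag_apply, mul_apply, Fintype.sum_eq_single i fun l hl => by rw [hD hl.symm, zero_mul],
    hM i, mul_zero]

theorem stmt6_general (d : ℕ) (U E : Matrix (Fin d) (Fin d) ℂ)
    (hU : U ∈ Matrix.unitaryGroup (Fin d) ℂ)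
    (hE : E ∈ Matrix.unitaryGroup (Fin d) ℂ) (hEdiag : E.IsDiag)
    (ρ : Matrix (Fin d) (Fin d) ℂ) (hρ : ρ.PosSemidef) (hρtr : ρ.trace = 1)
    (hdiag : ∀ i, (Uᴴ * ρ) i i = 0) :
    ((U * E).trace).re ≤ (d : ℝ) - 2 := by
  have h : ((U * E)ᴴ * ρ).trace = 0 := by
    rw [conjTranspose_mul, Matrix.mul_assoc]
    exact trace_mul_eq_zero_of_isDiag hEdiag.conjTranspose hdiag
  simpa using re_trace_le_card_sub_two_of_trace_conjTranspose_mul_eq_zero (mul_mem hU hE) hρ hρtr h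

theorem stmt6 (d : ℕ) (U E : Matrix (Fin d) (Fin d) ℂ)
    (hU : U ∈ Matrix.unitaryGroup (Fin d) ℂ)
    (hE : E ∈ Matrix.unitaryGroup (Fin d) ℂ) (hEdiag : E.IsDiag)
    (hpos : ∀ i, ((U * E) i i).im = 0 ∧ 0 ≤ ((U * E) i i).re)
    (ρ : Matrix (Fin d) (Fin d) ℂ) (hρ : ρ.PosSemidef) (hρtr : ρ.trace = 1)
    (hdiag : ∀ i, (Uᴴ * ρ) i i = 0) :
    ((U * E).trace).re ≤ (d : ℝ) - 2 :=
  stmt6_general d U E hU hE hEdiag ρ hρ hρtr hdiag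
end

section
/- Let x ∈ ℂ^d be a unit vector with max_i |x_i|² ≤ 1/2. Then there exists a unit vector y ∈ ℂ^d with |y_i| = |x_i| for all i and ⟨y|x⟩ = 0. -/
/-!
Put `a i = ‖x i‖ ^ 2` and let `i₀` be an index where `a` is largest. Greedily splitting the
remaining indices into two groups, always adding to the lighter one, gives groups of masses `P`
and `Q` with `|P - Q| ≤ a i₀`; together with `a i₀ ≤ P + Q` this says that `a i₀`, `P`, `Q` are
the side lengths of a (possibly degenerate) triangle. Closing that triangle in `ℂ` yields three
unit phases, one per group, and `y i = conj (c i) * x i` does the job.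
-/

open Complex Finset

theorem exists_subset_abs_two_mul_sum_sub_sum_le {ι : Type*} [DecidableEq ι] (a : ι → ℝ)
    {b : ℝ} (hb : 0 ≤ b) (s : Finset ι) (ha : ∀ i ∈ s, 0 ≤ a i ∧ a i ≤ b) :
    ∃ t ⊆ s, |2 * ∑ i ∈ t, a i - ∑ i ∈ s, a i| ≤ b := by
  induction s using Finset.induction_on with
  | empty => exact ⟨∅, subset_rfl, by simpa using hb⟩
  | insert j s hj ih =>
    obtain ⟨haj, hajb⟩ := ha j (mem_insert_self j s)
    obtain ⟨t, hts, ht⟩ := ih fun i hi => ha i (mem_insert_of_mem hi)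
    have hjt : j ∉ t := fun h => hj (hts h)
    rw [sum_insert hj]
    rw [abs_le] at ht
    by_cases hD : 0 ≤ 2 * ∑ i ∈ t, a i - ∑ i ∈ s, a i
    · exact ⟨t, hts.trans (subset_insert j s), abs_le.2 ⟨by linarith, by linarith⟩⟩
    · refine ⟨insert j t, insert_subset_insert j hts, ?_⟩
      rw [sum_insert hjt]
      exact abs_le.2 ⟨by linarith, by linarith⟩

theorem exists_norm_add_mul_exp_eq {M P Q : ℝ} (h₁ : |M - P| ≤ Q) (h₂ : Q ≤ M + P) :
    ∃ φ : ℝ, ‖(M + P * exp (φ * I) : ℂ)‖ = Q := by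
  have hcont : ContinuousOn (fun φ : ℝ => ‖(M + P * exp (φ * I) : ℂ)‖) (Set.Icc 0 Real.pi) := by
    fun_prop
  have hπ : ‖(M + P * exp (Real.pi * I) : ℂ)‖ = |M - P| := by
    rw [exp_pi_mul_I, mul_neg_one, ← sub_eq_add_neg, ← ofReal_sub, norm_real, Real.norm_eq_abs]
  have h0 : ‖(M + P * exp ((0 : ℝ) * I) : ℂ)‖ = |M + P| := by
    rw [ofReal_zero, zero_mul, exp_zero, mul_one, ← ofReal_add, norm_real, Real.norm_eq_abs]
  obtain ⟨φ, -, hφ⟩ := intermediate_value_Icc' Real.pi_pos.le hcont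
    (show Q ∈ Set.Icc _ _ by rw [hπ, h0]; exact ⟨h₁, h₂.trans (le_abs_self _)⟩)
  exact ⟨φ, hφ⟩

theorem exists_norm_eq_one_add_mul_add_mul_eq_zero {M P Q : ℝ} (h₁ : |M - P| ≤ Q)
    (h₂ : Q ≤ M + P) : ∃ u w : ℂ, ‖u‖ = 1 ∧ ‖w‖ = 1 ∧ M + P * u + Q * w = 0 := by
  obtain ⟨φ, hφ⟩ := exists_norm_add_mul_exp_eq h₁ h₂
  set z : ℂ := M + P * exp (φ * I)
  refine ⟨exp (φ * I), -exp (arg z * I), norm_exp_ofReal_mul_I φ, by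
    rw [norm_neg, norm_exp_ofReal_mul_I], ?_⟩
  rw [← hφ, mul_neg, ← sub_eq_add_neg, norm_mul_exp_arg_mul_I, sub_self]

theorem exists_forall_norm_eq_one_sum_mul_eq_zero {ι : Type*} [Fintype ι] [DecidableEq ι]
    (a : ι → ℝ) (ha : ∀ i, 0 ≤ a i) (hle : ∀ i, 2 * a i ≤ ∑ j, a j) :
    ∃ c : ι → ℂ, (∀ i, ‖c i‖ = 1) ∧ ∑ i, (a i : ℂ) * c i = 0 := by
  cases isEmpty_or_nonempty ι
  · exact ⟨fun _ => 1, by simp, by simp⟩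
  obtain ⟨i₀, -, hi₀⟩ := exists_max_image univ a univ_nonempty
  set s := univ.erase i₀
  obtain ⟨t, hts, ht⟩ := exists_subset_abs_two_mul_sum_sub_sum_le a (ha i₀) s
    fun i _ => ⟨ha i, hi₀ i (mem_univ i)⟩
  have hsum : a i₀ + ∑ i ∈ s, a i = ∑ i, a i := add_sum_erase _ _ (mem_univ i₀)
  rw [abs_le] at ht
  obtain ⟨u, w, hu, hw, huw⟩ := exists_norm_eq_one_add_mul_add_mul_eq_zero
    (M := a i₀) (P := ∑ i ∈ t, a i) (Q := ∑ i ∈ s \ t, a i)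
    (by rw [sum_sdiff_eq_sub hts]; exact abs_le.2 ⟨by linarith, by linarith [hle i₀]⟩)
    (by rw [sum_sdiff_eq_sub hts]; linarith)
  have hne : ∀ i ∈ s, i ≠ i₀ := fun i hi => ne_of_mem_erase hi
  set c : ι → ℂ := fun i => if i = i₀ then 1 else if i ∈ t then u else w
  have hct : ∑ i ∈ t, (a i : ℂ) * c i = (∑ i ∈ t, a i : ℝ) * u := by
    push_cast
    rw [sum_mul]
    exact sum_congr rfl fun i hi => by simp [c, hne i (hts hi), hi]
  have hcst : ∑ i ∈ s \ t, (a i : ℂ) * c i = (∑ i ∈ s \ t, a i : ℝ) * w := by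
    push_cast
    rw [sum_mul]
    exact sum_congr rfl fun i hi => by
      simp [c, hne i (sdiff_subset hi), (mem_sdiff.1 hi).2]
  refine ⟨c, fun i => ?_, ?_⟩
  · simp only [c]
    split_ifs <;> simp [hu, hw]
  · rw [← add_sum_erase _ _ (mem_univ i₀), ← sum_sdiff hts, hct, hcst]
    simp only [c, if_pos rfl, mul_one]
    linear_combination huw

open Matrix

theorem stmt10 (d : ℕ) (x : Fin d → ℂ)
    (hx : ∑ i, ‖x i‖ ^ 2 = 1)
    (hmax : ∀ i, ‖x i‖ ^ 2 ≤ 1 / 2) :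
    ∃ y : Fin d → ℂ, (∀ i, ‖y i‖ = ‖x i‖) ∧
      ∑ i, (starRingEnd ℂ) (y i) * x i = 0 := by
  obtain ⟨c, hc, hsum⟩ := exists_forall_norm_eq_one_sum_mul_eq_zero (fun i => ‖x i‖ ^ 2)
    (fun i => by positivity) (fun i => by rw [hx]; linarith [hmax i])
  refine ⟨fun i => starRingEnd ℂ (c i) * x i, fun i => by rw [norm_mul, norm_conj, hc, one_mul], ?_⟩
  rw [← hsum]
  refine sum_congr rfl fun i _ => ?_
  rw [map_mul, conj_conj, mul_assoc, conj_mul', mul_comm]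
  norm_cast
end

section
/- Let U = I − 2|x⟩⟨x| with x a unit vector and |x_0|² = ω > 1/2 (where ω = max_i |x_i|², attained at index 0), ω < 1. Let E' = I − 2|0⟩⟨0|. Then the eigenvalues of UE' are 2ω − 1 + 2√(ω(1−ω)) i, 2ω − 1 − 2√(ω(1−ω)) i, and 1 with multiplicity d−2. -/
/-!
Both factors are rank-one perturbations of the identity, so `U * E' = 1 + B * N` with `B` of
size `d × 2`. Sylvester's identity `X ^ 2 * χ(B * N) = X ^ d * χ(N * B)` then shows that
`χ(U * E')` is `(X - 1) ^ (d - 2)` times the characteristic polynomial of the `2 × 2` matrix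
`1 + N * B`, whose trace is `4ω - 2` and whose determinant is `det U * det E' = 1`; its roots are
`2ω - 1 ± 2i√(ω(1 - ω))`.
-/

open Matrix Polynomial

namespace Matrix

variable {R n : Type*} [CommRing R]

theorem transpose_of_mul_of_fin_two (a c r s : n → R) :
    (of ![a, c])ᵀ * of ![r, s] = vecMulVec a r + vecMulVec c s := by
  ext i k
  simp [mul_apply, Fin.sum_univ_two, vecMulVec_apply]

variable [Fintype n]

theorem of_mul_transpose_of_fin_two (r s a c : n → R) :
    of ![r, s] * (of ![a, c])ᵀ = !![r ⬝ᵥ a, r ⬝ᵥ c; s ⬝ᵥ a, s ⬝ᵥ c] := by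
  ext i j
  fin_cases i <;> fin_cases j <;> rfl

variable [DecidableEq n]

theorem charpoly_one_add (M : Matrix n n R) : (1 + M).charpoly = M.charpoly.comp (X - C 1) := by
  simpa [sub_eq_add_neg, add_comm] using charpoly_sub_scalar M (-1)

theorem charpoly_one_add_mul_of_le {m : Type*} [Fintype m] [DecidableEq m]
    (A : Matrix n m R) (B : Matrix m n R)
    (hle : Fintype.card m ≤ Fintype.card n) :
    (1 + A * B).charpoly =
      (X - C 1) ^ (Fintype.card n - Fintype.card m) * (1 + B * A).charpoly := by
  rw [charpoly_one_add, charpoly_one_add, charpoly_mul_comm_of_le A B hle, mul_comp, X_pow_comp]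

theorem one_sub_vecMulVec_mul_one_sub_vecMulVec (a b c e : n → R) :
    (1 - vecMulVec a b) * (1 - vecMulVec c e) =
      1 + (of ![a, c])ᵀ * of ![(b ⬝ᵥ c) • e - b, -e] := by
  rw [transpose_of_mul_of_fin_two, vecMulVec_sub, vecMulVec_neg, ← vecMulVec_mul_vecMulVec]
  noncomm_ring

theorem charpoly_one_sub_vecMulVec_mul_one_sub_vecMulVec [Nontrivial R] (a b c e : n → R)
    (hn : 2 ≤ Fintype.card n) :
    ((1 - vecMulVec a b) * (1 - vecMulVec c e)).charpoly =
      (X - C 1) ^ (Fintype.card n - 2) *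
        (X ^ 2 - C (2 + (b ⬝ᵥ c) * (e ⬝ᵥ a) - b ⬝ᵥ a - e ⬝ᵥ c) * X
          + C ((1 - b ⬝ᵥ a) * (1 - e ⬝ᵥ c))) := by
  rw [one_sub_vecMulVec_mul_one_sub_vecMulVec,
    charpoly_one_add_mul_of_le _ _ (by simpa using hn), Fintype.card_fin, charpoly_fin_two,
    of_mul_transpose_of_fin_two]
  congr 4
  · rw [trace_fin_two]
    congr 1
    simp only [add_apply, one_apply_eq, of_apply, cons_val', cons_val_zero, cons_val_one,
      cons_val_fin_one, sub_dotProduct, smul_dotProduct, neg_dotProduct, smul_eq_mul]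
    ring
  · rw [det_fin_two]
    simp only [add_apply, one_apply_eq, one_apply_ne zero_ne_one, one_apply_ne one_ne_zero,
      of_apply, cons_val', cons_val_zero, cons_val_one, cons_val_fin_one, sub_dotProduct,
      smul_dotProduct, neg_dotProduct, smul_eq_mul]
    ring

end Matrix

theorem X_sub_C_mul_X_sub_C {R : Type*} [CommRing R] (a b : R) :
    (X - C a) * (X - C b) = X ^ 2 - C (a + b) * X + C (a * b) := by
  simp only [C_add, C_mul]
  ring

theorem X_sub_C_mul_X_sub_C_of_sqrt {ω : ℝ} (h0 : 0 ≤ ω) (h1 : ω ≤ 1) :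
    (X - C ((2 * ω - 1 : ℝ) + 2 * Real.sqrt (ω * (1 - ω)) * Complex.I))
      * (X - C ((2 * ω - 1 : ℝ) - 2 * Real.sqrt (ω * (1 - ω)) * Complex.I))
      = X ^ 2 - C (4 * ω - 2 : ℂ) * X + C 1 := by
  have hsq : (Real.sqrt (ω * (1 - ω)) : ℂ) ^ 2 = ω * (1 - ω) := by
    exact_mod_cast Real.sq_sqrt (mul_nonneg h0 (sub_nonneg.2 h1))
  rw [X_sub_C_mul_X_sub_C]
  congr 4
  · push_cast
    ring
  · push_cast
    linear_combination (-4 * (Real.sqrt (ω * (1 - ω)) : ℂ) ^ 2) * Complex.I_sq + 4 * hsq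

theorem stmt14_general (d : ℕ) (hd : 0 < d) (x : Fin d → ℂ) (ω : ℝ)
    (hx : ∑ i, ‖x i‖ ^ 2 = 1)
    (hω0 : ‖x ⟨0, hd⟩‖ ^ 2 = ω)
    (hωhi : ω < 1)
    (U E' : Matrix (Fin d) (Fin d) ℂ)
    (hU : U = 1 - (2 : ℂ) • Matrix.vecMulVec x (star x))
    (hE' : E' = 1 - (2 : ℂ) • Matrix.single ⟨0, hd⟩ ⟨0, hd⟩ (1 : ℂ)) :
    (U * E').charpoly =
      (X - C ((2 * ω - 1 : ℝ) + 2 * Real.sqrt (ω * (1 - ω)) * Complex.I))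
        * (X - C ((2 * ω - 1 : ℝ) - 2 * Real.sqrt (ω * (1 - ω)) * Complex.I))
        * (X - C 1) ^ (d - 2) := by
  set z : Fin d := ⟨0, hd⟩
  have hd2 : 2 ≤ d := by
    by_contra! h
    obtain rfl : d = 1 := by omega
    rw [Fin.sum_univ_one] at hx
    exact hωhi.ne (hω0.symm.trans hx)
  have hxx : star x ⬝ᵥ x = 1 := by
    simp only [dotProduct, Pi.star_apply, RCLike.star_def, Complex.conj_mul']
    exact_mod_cast hx
  have hxz : starRingEnd ℂ (x z) * x z = ω := by
    rw [Complex.conj_mul', ← hω0]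
    norm_cast
  have htrace : 2 + (star x ⬝ᵥ (2 : ℂ) • Pi.single z 1) * (Pi.single z 1 ⬝ᵥ (2 : ℂ) • x)
      - star x ⬝ᵥ (2 : ℂ) • x - Pi.single z 1 ⬝ᵥ (2 : ℂ) • Pi.single z 1
      = 4 * ω - 2 := by
    simp only [dotProduct_smul, dotProduct_single, single_dotProduct, Pi.star_apply,
      RCLike.star_def, Pi.single_eq_same, smul_eq_mul, mul_one, one_mul, hxx]
    linear_combination 4 * hxz
  have hdet :
      (1 - star x ⬝ᵥ (2 : ℂ) • x) * (1 - Pi.single z 1 ⬝ᵥ (2 : ℂ) • Pi.single z 1) = 1 := by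
    norm_num [dotProduct_smul, hxx]
  rw [hU, hE', single_eq_single_vecMulVec_single, ← smul_vecMulVec, ← smul_vecMulVec,
    charpoly_one_sub_vecMulVec_mul_one_sub_vecMulVec _ _ _ _ (by simpa using hd2), htrace, hdet,
    X_sub_C_mul_X_sub_C_of_sqrt (hω0 ▸ sq_nonneg _) hωhi.le, Fintype.card_fin, mul_comm]

theorem stmt14 (d : ℕ) (hd : 0 < d) (x : Fin d → ℂ) (ω : ℝ)
    (hx : ∑ i, ‖x i‖ ^ 2 = 1)
    (hω0 : ‖x ⟨0, hd⟩‖ ^ 2 = ω)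
    (hωmax : ∀ i, ‖x i‖ ^ 2 ≤ ω)
    (hωlo : 1 / 2 < ω) (hωhi : ω < 1)
    (U E' : Matrix (Fin d) (Fin d) ℂ)
    (hU : U = 1 - (2 : ℂ) • Matrix.vecMulVec x (star x))
    (hE' : E' = 1 - (2 : ℂ) • Matrix.single ⟨0, hd⟩ ⟨0, hd⟩ (1 : ℂ)) :
    (U * E').charpoly =
      (X - C ((2 * ω - 1 : ℝ) + 2 * Real.sqrt (ω * (1 - ω)) * Complex.I))
        * (X - C ((2 * ω - 1 : ℝ) - 2 * Real.sqrt (ω * (1 - ω)) * Complex.I))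
        * (X - C 1) ^ (d - 2) :=
  stmt14_general d hd x ω hx hω0 hωhi U E' hU hE'
end

section
/- Let F_d be the d×d Fourier matrix with entries (F_d)_{jk} = e^{2πijk/d}/√d, d ≥ 4. Then the matrix X with entries X_{00} = 4cos(2π/d), X_{01} = X_{0,d−1} = X_{10} = X_{d−1,0} = −2cos(2π/d), X_{11} = X_{1,d−1} = X_{d−1,1} = X_{d−1,d−1} = 1, and all other entries 0, is positive semidefinite of rank at most 2 and satisfies diag(F_d† X) = 0. -/
open Matrix
open scoped ComplexOrder Real

/-!
Put `a = 2 cos (2π/d)`, so `0 ≤ a ≤ 2` as `d ≥ 4`. Then `X = v v* + a (2 - a) e₀ e₀*` with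
`v = a e₀ - e₁ - e_{d-1}`: a sum of two positive semidefinite matrices of rank at most one.
The `l`-th diagonal entry of `F* X` pairs column `l` of `F` with column `l` of `X`, so only
`l ∈ {0, 1, d-1}` matter; there it vanishes because `F_{kl} = ω^{kl}/√d` with `ω = e^{2πi/d}`,
and `ω + ω^{d-1} = a`, `ω^{(d-1)²} = ω`.
-/

namespace Matrix

section

variable {n R : Type*}

theorem vecMulVec_self_star_add_eq_conjTranspose_mul [CommRing R] [StarRing R] (u w : n → R) :
    vecMulVec u (star u) + vecMulVec w (star w) =
      (of ![star u, star w])ᴴ * of ![star u, star w] := by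
  ext a b
  simp [mul_apply, Fin.sum_univ_two, vecMulVec_apply]

theorem rank_vecMulVec_self_star_add_le_two [Fintype n] [Field R] [PartialOrder R] [StarRing R]
    [StarOrderedRing R] (u w : n → R) :
    (vecMulVec u (star u) + vecMulVec w (star w)).rank ≤ 2 := by
  rw [vecMulVec_self_star_add_eq_conjTranspose_mul, rank_conjTranspose_mul_self]
  simpa using rank_le_card_height (of ![star u, star w])

end

variable {n : Type*} [DecidableEq n]

/-- The paper's `X` is `threePointMatrix (2 * cos (2π/d)) 0 1 (d-1)`. -/
noncomputable def threePointMatrix (a : ℝ) (i j k : n) : Matrix n n ℂ :=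
  (2 * a : ℂ) • single i i 1 - (a : ℂ) • (single i j 1 + single i k 1 + single j i 1 + single k i 1)
    + (single j j 1 + single j k 1 + single k j 1 + single k k 1)

theorem threePointMatrix_isHermitian (a : ℝ) (i j k : n) :
    (threePointMatrix a i j k).IsHermitian := by
  simp only [IsHermitian, threePointMatrix, smul_single, smul_eq_mul, mul_one, smul_add,
    conjTranspose_add, conjTranspose_sub, conjTranspose_single, star_mul', star_ofNat,
    RCLike.star_def, Complex.conj_ofReal, star_one]
  abel

theorem threePointMatrix_eq (a : ℝ) (i j k : n) {t : ℝ} (ht : t * t = a * (2 - a)) :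
    threePointMatrix a i j k =
      vecMulVec ((a : ℂ) • Pi.single i 1 - Pi.single j 1 - Pi.single k 1)
          (star ((a : ℂ) • Pi.single i 1 - Pi.single j 1 - Pi.single k 1)) +
        vecMulVec ((t : ℂ) • Pi.single i 1) (star ((t : ℂ) • Pi.single i 1)) := by
  have htC : (t : ℂ) * t = a * (2 - a) := by exact_mod_cast ht
  simp only [star_sub, star_smul, Pi.star_single, star_one, Complex.star_def, Complex.conj_ofReal,
    sub_vecMulVec, vecMulVec_sub, smul_vecMulVec, vecMulVec_smul,
    ← single_eq_single_vecMulVec_single, threePointMatrix]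
  linear_combination (norm := module) htC.symm • single i i (1 : ℂ)

variable [Fintype n]

theorem posSemidef_threePointMatrix {a : ℝ} (ha₀ : 0 ≤ a) (ha₂ : a ≤ 2) (i j k : n) :
    (threePointMatrix a i j k).PosSemidef := by
  rw [threePointMatrix_eq a i j k (Real.mul_self_sqrt (by nlinarith))]
  exact (posSemidef_vecMulVec_self_star _).add (posSemidef_vecMulVec_self_star _)

theorem rank_threePointMatrix_le_two {a : ℝ} (ha₀ : 0 ≤ a) (ha₂ : a ≤ 2) (i j k : n) :
    (threePointMatrix a i j k).rank ≤ 2 := by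
  rw [threePointMatrix_eq a i j k (Real.mul_self_sqrt (by nlinarith))]
  exact rank_vecMulVec_self_star_add_le_two _ _

theorem threePointMatrix_mul_apply_self_eq_zero {a : ℝ} {i j k : n} (hij : i ≠ j) (hik : i ≠ k)
    (hjk : j ≠ k) {A : Matrix n n ℂ} (hi : A j i + A k i = 2 * A i i)
    (hj : A j j + A k j = a * A i j) (hk : A j k + A k k = a * A i k) (l : n) :
    (threePointMatrix a i j k * A) l l = 0 := by
  simp only [threePointMatrix, Matrix.add_mul, Matrix.sub_mul, Matrix.smul_mul, add_apply,
    sub_apply, smul_apply, smul_eq_mul]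
  obtain rfl | hli := eq_or_ne l i
  · simp only [single_mul_apply_same, single_mul_apply_of_ne _ _ _ _ _ hij,
      single_mul_apply_of_ne _ _ _ _ _ hik, one_mul, add_zero]
    linear_combination (-(a : ℂ)) * hi
  obtain rfl | hlj := eq_or_ne l j
  · simp only [single_mul_apply_same, single_mul_apply_of_ne _ _ _ _ _ hij.symm,
      single_mul_apply_of_ne _ _ _ _ _ hjk, one_mul, mul_zero, add_zero, zero_add, zero_sub]
    linear_combination hj
  obtain rfl | hlk := eq_or_ne l k
  · simp only [single_mul_apply_same, single_mul_apply_of_ne _ _ _ _ _ hik.symm,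
      single_mul_apply_of_ne _ _ _ _ _ hjk.symm, one_mul, mul_zero, add_zero, zero_add, zero_sub]
    linear_combination hk
  simp [hli, hlj, hlk]

theorem conjTranspose_mul_threePointMatrix_apply_self_eq_zero {a : ℝ} {i j k : n} (hij : i ≠ j)
    (hik : i ≠ k) (hjk : j ≠ k) {A : Matrix n n ℂ} (hi : A j i + A k i = 2 * A i i)
    (hj : A j j + A k j = a * A i j) (hk : A j k + A k k = a * A i k) (l : n) :
    (Aᴴ * threePointMatrix a i j k) l l = 0 := by
  have h := congrArg star (threePointMatrix_mul_apply_self_eq_zero hij hik hjk hi hj hk l)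
  rwa [star_zero, ← conjTranspose_apply, conjTranspose_mul,
    (threePointMatrix_isHermitian a i j k).eq] at h

end Matrix

theorem pow_pred_mul_pred_of_pow_eq_one {M : Type*} [Monoid M] {ζ : M} {d : ℕ} (hd : d ≠ 0)
    (h : ζ ^ d = 1) : ζ ^ ((d - 1) * (d - 1)) = ζ := by
  obtain _ | _ | e := d
  · contradiction
  · simpa using h.symm
  · calc ζ ^ ((e + 2 - 1) * (e + 2 - 1)) = (ζ ^ (e + 2)) ^ e * ζ := by
          rw [← pow_mul, ← pow_succ, Nat.add_succ_sub_one]; ring_nf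
      _ = ζ := by rw [h, one_pow, one_mul]

namespace Complex

theorem exp_two_pi_I_mul_mul_div (d j k : ℕ) :
    exp (2 * π * I * j * k / d) = exp (2 * π * I / d) ^ (j * k) := by
  rw [← exp_nat_mul]
  push_cast
  ring_nf

theorem exp_two_pi_I_div_add_pow_pred {d : ℕ} (hd : d ≠ 0) :
    exp (2 * π * I / d) + exp (2 * π * I / d) ^ (d - 1) = 2 * Real.cos (2 * π / d) := by
  have hinv : exp (2 * π * I / d) ^ (d - 1) = exp (-(2 * π / d * I)) := by
    rw [exp_neg, ← mul_div_right_comm]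
    refine eq_inv_of_mul_eq_one_left ?_
    rw [← pow_succ, Nat.sub_add_cancel (Nat.one_le_iff_ne_zero.mpr hd),
      (isPrimitiveRoot_exp d hd).pow_eq_one]
  rw [hinv, ofReal_cos, ofReal_div, two_cos]
  push_cast
  ring_nf

end Complex

theorem Real.cos_two_pi_div_nonneg {d : ℕ} (hd : 4 ≤ d) : 0 ≤ Real.cos (2 * π / d) := by
  have hd' : (4 : ℝ) ≤ d := by exact_mod_cast hd
  apply Real.cos_nonneg_of_mem_Icc
  constructor
  · have : 0 ≤ 2 * π / d := by positivity
    linarith [Real.pi_pos]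
  · calc 2 * π / d ≤ 2 * π / 4 := by gcongr
      _ = π / 2 := by ring

theorem stmt15 (d : ℕ) (hd : 4 ≤ d)
    (F X : Matrix (Fin d) (Fin d) ℂ)
    (hF : ∀ j k : Fin d, F j k =
      Complex.exp (2 * π * Complex.I * (j : ℕ) * (k : ℕ) / d) / Real.sqrt d)
    (hX : X =
      (4 * Real.cos (2 * π / d) : ℂ) •
          Matrix.single (⟨0, by omega⟩ : Fin d) (⟨0, by omega⟩ : Fin d) (1 : ℂ)
        - (2 * Real.cos (2 * π / d) : ℂ) •
          (Matrix.single (⟨0, by omega⟩ : Fin d) (⟨1, by omega⟩ : Fin d) (1 : ℂ)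
            + Matrix.single (⟨0, by omega⟩ : Fin d) (⟨d - 1, by omega⟩ : Fin d) (1 : ℂ)
            + Matrix.single (⟨1, by omega⟩ : Fin d) (⟨0, by omega⟩ : Fin d) (1 : ℂ)
            + Matrix.single (⟨d - 1, by omega⟩ : Fin d) (⟨0, by omega⟩ : Fin d) (1 : ℂ))
        + (Matrix.single (⟨1, by omega⟩ : Fin d) (⟨1, by omega⟩ : Fin d) (1 : ℂ)
            + Matrix.single (⟨1, by omega⟩ : Fin d) (⟨d - 1, by omega⟩ : Fin d) (1 : ℂ)
            + Matrix.single (⟨d - 1, by omega⟩ : Fin d) (⟨1, by omega⟩ : Fin d) (1 : ℂ)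
            + Matrix.single (⟨d - 1, by omega⟩ : Fin d) (⟨d - 1, by omega⟩ : Fin d) (1 : ℂ))) :
    X.PosSemidef ∧ X.rank ≤ 2 ∧ ∀ j, (Fᴴ * X) j j = 0 := by
  have hd₀ : d ≠ 0 := by omega
  set a := 2 * Real.cos (2 * π / d) with ha
  have ha₀ : 0 ≤ a := by have := Real.cos_two_pi_div_nonneg hd; positivity
  have ha₂ : a ≤ 2 := by linarith [Real.cos_le_one (2 * π / d)]
  have hXa : X = threePointMatrix a ⟨0, by omega⟩ ⟨1, by omega⟩ ⟨d - 1, by omega⟩ := by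
    rw [hX, threePointMatrix, ha]
    push_cast
    ring_nf
  have hF' (j k : Fin d) :
      F j k = Complex.exp (2 * π * Complex.I / d) ^ ((j : ℕ) * k) / Real.sqrt d := by
    rw [hF, Complex.exp_two_pi_I_mul_mul_div]
  refine ⟨hXa ▸ posSemidef_threePointMatrix ha₀ ha₂ _ _ _,
    hXa ▸ rank_threePointMatrix_le_two ha₀ ha₂ _ _ _, fun l => hXa ▸ ?_⟩
  refine conjTranspose_mul_threePointMatrix_apply_self_eq_zero (by simp [Fin.ext_iff])
    (by simp [Fin.ext_iff]; omega) (by simp [Fin.ext_iff]; omega) ?_ ?_ ?_ l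
  · simp only [hF', mul_zero, pow_zero]
    ring
  · simp only [hF', mul_one, pow_one, pow_zero]
    rw [← add_div, Complex.exp_two_pi_I_div_add_pow_pred hd₀, ha]
    push_cast
    ring
  · simp only [hF', one_mul, zero_mul, pow_zero,
      pow_pred_mul_pred_of_pow_eq_one hd₀ (Complex.isPrimitiveRoot_exp d hd₀).pow_eq_one]
    rw [← add_div, add_comm, Complex.exp_two_pi_I_div_add_pow_pred hd₀, ha]
    push_cast
    ring
end

section
/- Let U ∈ U(d) and suppose there exists a density matrix ρ with diag(U†ρ) = 0. Then for every diagonal (not necessarily unitary) matrix D, 0 belongs to the numerical range of UD + D†U†. -/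
open Matrix
open scoped ComplexOrder

/-!
With `B = U * D`, the matrix `A = B + Bᴴ` is Hermitian and `Tr (A ρ) = 2 Re Tr (Bᴴ ρ)`, while
`Tr (Dᴴ (Uᴴ ρ)) = ∑ᵢ conj (Dᵢᵢ) (Uᴴ ρ)ᵢᵢ = 0`. Writing `ρ = ∑ₖ λₖ vₖ vₖᴴ` with `λₖ ≥ 0`,
`∑ₖ λₖ = 1`, the real quadratic form `q x = xᴴ A x` has `∑ₖ λₖ q vₖ = 0`, so it takes a value
`≤ 0` and a value `≥ 0` on nonzero vectors. The nonzero vectors of `ℂᵈ` form a connected set, so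
`q` vanishes at some `x ≠ 0`, and `x / ‖x‖` exhibits `0` in the numerical range.
-/

theorem isPreconnected_compl_singleton_of_complex {E : Type*} [NormedAddCommGroup E]
    [NormedSpace ℂ E] (x : E) : IsPreconnected ({x}ᶜ : Set E) := by
  rcases subsingleton_or_nontrivial E with hE | hE
  · have : ({x}ᶜ : Set E) = ∅ := by
      simp [Set.eq_empty_iff_forall_notMem, Subsingleton.elim _ x]
    rw [this]
    exact isPreconnected_empty
  · refine (isConnected_compl_singleton_of_one_lt_rank ?_ x).isPreconnected
    have : (1 : Cardinal) ≤ Module.rank ℂ E := Cardinal.one_le_iff_pos.mpr rank_pos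
    rw [rank_real_of_complex]
    calc (1 : Cardinal) < 2 := Cardinal.one_lt_two
      _ = 2 * 1 := (mul_one 2).symm
      _ ≤ 2 * Module.rank ℂ E := by gcongr

theorem Finset.exists_nonpos_of_sum_mul_nonpos {ι : Type*} {s : Finset ι} {w f : ι → ℝ}
    (hw : ∀ i ∈ s, 0 ≤ w i) (hw_pos : 0 < ∑ i ∈ s, w i) (h : ∑ i ∈ s, w i * f i ≤ 0) :
    ∃ i ∈ s, f i ≤ 0 := by
  by_contra! hf
  obtain ⟨i, hi, hwi⟩ : ∃ i ∈ s, 0 < w i :=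
    Finset.exists_lt_of_sum_lt (f := fun _ => 0) (by simpa using hw_pos)
  have : 0 < ∑ i ∈ s, w i * f i :=
    Finset.sum_pos' (fun j hj => mul_nonneg (hw j hj) (hf j hj).le) ⟨i, hi, mul_pos hwi (hf i hi)⟩
  linarith

namespace Matrix

variable {n : Type*} [Fintype n]

theorem trace_mul_eq_zero_of_isDiag_s17 {α : Type*} [NonUnitalNonAssocSemiring α] [DecidableEq n]
    {D M : Matrix n n α} (hD : D.IsDiag) (hM : ∀ i, M i i = 0) : (D * M).trace = 0 := by
  rw [← hD.diagonal_diag]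
  simp [trace, diagonal_mul, hM]

theorem trace_add_conjTranspose_mul_eq_zero {R : Type*} [CommRing R] [StarRing R]
    {B ρ : Matrix n n R} (hρ : ρ.IsHermitian) (h : (Bᴴ * ρ).trace = 0) :
    ((B + Bᴴ) * ρ).trace = 0 := by
  have : (B * ρ).trace = star (Bᴴ * ρ).trace := by
    rw [← trace_conjTranspose, conjTranspose_mul, conjTranspose_conjTranspose, hρ.eq,
      trace_mul_comm]
  rw [add_mul, trace_add, this, h, star_zero, add_zero]

theorem IsHermitian.trace_mul_eq_sum {𝕜 : Type*} [DecidableEq n] [RCLike 𝕜]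
    {H : Matrix n n 𝕜} (hH : H.IsHermitian) (M : Matrix n n 𝕜) :
    (M * H).trace = ∑ i, (hH.eigenvalues i : 𝕜) *
      (star ⇑(hH.eigenvectorBasis i) ⬝ᵥ M *ᵥ ⇑(hH.eigenvectorBasis i)) := by
  conv_lhs => rw [hH.spectral_theorem, Unitary.conjStarAlgAut_apply]
  rw [← Matrix.mul_assoc, trace_mul_cycle, ← Matrix.mul_assoc, trace]
  refine Finset.sum_congr rfl fun i _ => ?_
  rw [diag_apply, mul_diagonal, mul_comm]
  simp only [Function.comp_apply, mul_apply, star_apply, eigenvectorUnitary_apply,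
    RCLike.star_def, Finset.sum_mul, Finset.mul_sum, dotProduct, Pi.star_apply, mulVec]
  rw [Finset.sum_comm]
  simp only [mul_assoc]

def numericalRange (A : Matrix n n ℂ) : Set ℂ :=
  {z | ∃ x : n → ℂ, star x ⬝ᵥ x = 1 ∧ star x ⬝ᵥ A *ᵥ x = z}

theorem zero_mem_numericalRange_of_dotProduct_mulVec_eq_zero {A : Matrix n n ℂ} {x : n → ℂ}
    (hx : x ≠ 0) (hAx : star x ⬝ᵥ A *ᵥ x = 0) : 0 ∈ numericalRange A := by
  obtain ⟨hr, hr_im⟩ := Complex.pos_iff.mp (dotProduct_star_self_pos_iff.mpr hx)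
  set r := (star x ⬝ᵥ x).re
  have hxx : star x ⬝ᵥ x = r := Complex.ext rfl (by simpa using hr_im.symm)
  set c : ℂ := (((√r)⁻¹ : ℝ) : ℂ)
  refine ⟨c • x, ?_, ?_⟩
  · have : (star c * c : ℂ) * r = 1 := by
      simp only [c, Complex.star_def, Complex.conj_ofReal]
      norm_cast
      rw [← sq, inv_pow, Real.sq_sqrt hr.le, inv_mul_cancel₀ hr.ne']
    simpa [star_smul, smul_dotProduct, dotProduct_smul, hxx, mul_assoc, mul_comm, mul_left_comm]
      using this
  · simp [star_smul, mulVec_smul, smul_dotProduct, dotProduct_smul, hAx]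

theorem IsHermitian.zero_mem_numericalRange_of_nonpos_of_nonneg {A : Matrix n n ℂ}
    (hA : A.IsHermitian) {u v : n → ℂ} (hu : u ≠ 0) (hv : v ≠ 0) (hAu : (star u ⬝ᵥ A *ᵥ u).re ≤ 0)
    (hAv : 0 ≤ (star v ⬝ᵥ A *ᵥ v).re) : 0 ∈ numericalRange A := by
  have hcont : Continuous fun x : n → ℂ => (star x ⬝ᵥ A *ᵥ x).re := by fun_prop
  obtain ⟨x, hx, hAx⟩ := (isPreconnected_compl_singleton_of_complex 0).intermediate_value
    hu hv hcont.continuousOn ⟨hAu, hAv⟩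
  exact zero_mem_numericalRange_of_dotProduct_mulVec_eq_zero hx
    (Complex.ext hAx (hA.im_star_dotProduct_mulVec_self x))

theorem IsHermitian.zero_mem_numericalRange_of_trace_mul_eq_zero [DecidableEq n]
    {A ρ : Matrix n n ℂ} (hA : A.IsHermitian) (hρ : ρ.PosSemidef) (hρ_tr : ρ.trace = 1)
    (h : (A * ρ).trace = 0) : 0 ∈ numericalRange A := by
  set v := fun k => ⇑(hρ.1.eigenvectorBasis k)
  set p := hρ.1.eigenvalues
  have hv : ∀ k, v k ≠ 0 := fun k hk =>
    hρ.1.eigenvectorBasis.orthonormal.ne_zero k (by simpa [v] using congrArg (WithLp.toLp 2) hk)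
  have hp : ∀ k ∈ Finset.univ, 0 ≤ p k := fun k _ => hρ.eigenvalues_nonneg k
  have hp_pos : 0 < ∑ k, p k := by
    have : ∑ k, p k = 1 := by
      simpa [hρ_tr] using (congrArg Complex.re hρ.1.trace_eq_sum_eigenvalues).symm
    rw [this]
    exact one_pos
  have hsum : ∑ k, p k * (star (v k) ⬝ᵥ A *ᵥ v k).re = 0 := by
    simpa using congrArg Complex.re ((hρ.1.trace_mul_eq_sum A).symm.trans h)
  obtain ⟨k, -, hk⟩ := Finset.exists_nonpos_of_sum_mul_nonpos hp hp_pos hsum.le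
  obtain ⟨l, -, hl⟩ := Finset.exists_nonpos_of_sum_mul_nonpos
    (f := fun k => -(star (v k) ⬝ᵥ A *ᵥ v k).re) hp hp_pos (by simp [hsum])
  exact hA.zero_mem_numericalRange_of_nonpos_of_nonneg (hv k) (hv l) hk (neg_nonpos.mp hl)

end Matrix

theorem stmt17_general (d : ℕ) (U : Matrix (Fin d) (Fin d) ℂ)
    (hρ : ∃ ρ : Matrix (Fin d) (Fin d) ℂ, ρ.PosSemidef ∧ ρ.trace = 1 ∧
      ∀ i, (Uᴴ * ρ) i i = 0) :
    ∀ D : Matrix (Fin d) (Fin d) ℂ, D.IsDiag →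
      ∃ x : Fin d → ℂ, star x ⬝ᵥ x = 1 ∧
        star x ⬝ᵥ (U * D + Dᴴ * Uᴴ).mulVec x = 0 := by
  intro D hD
  obtain ⟨ρ, hρ, hρ_tr, hUρ⟩ := hρ
  rw [← conjTranspose_mul]
  have h : ((U * D + (U * D)ᴴ) * ρ).trace = 0 := by
    refine trace_add_conjTranspose_mul_eq_zero hρ.1 ?_
    rw [conjTranspose_mul, Matrix.mul_assoc]
    exact trace_mul_eq_zero_of_isDiag_s17 hD.conjTranspose hUρ
  exact (isHermitian_add_transpose_self (U * D)).zero_mem_numericalRange_of_trace_mul_eq_zero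
    hρ hρ_tr h

theorem stmt17 (d : ℕ) (U : Matrix (Fin d) (Fin d) ℂ)
    (hU : U ∈ Matrix.unitaryGroup (Fin d) ℂ)
    (hρ : ∃ ρ : Matrix (Fin d) (Fin d) ℂ, ρ.PosSemidef ∧ ρ.trace = 1 ∧
      ∀ i, (Uᴴ * ρ) i i = 0) :
    ∀ D : Matrix (Fin d) (Fin d) ℂ, D.IsDiag →
      ∃ x : Fin d → ℂ, star x ⬝ᵥ x = 1 ∧
        star x ⬝ᵥ (U * D + Dᴴ * Uᴴ).mulVec x = 0 :=
  stmt17_general d U hρ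
end

section
/- Let U ∈ U(d), E diagonal unitary, D_+ diagonal with strictly positive entries, and suppose 0 ∈ W(UE). Then 0 ∈ W(UE D_+), i.e., there exists a density matrix σ with Tr(UE D_+ σ) = 0. -/
/-!
A normal matrix is unitarily diagonalizable, `A = V diag(μ) V*`, and then
`x* A x = ∑ |(V* x)ᵢ|² μᵢ` writes `0` as a convex combination `∑ pᵢ μᵢ` of the eigenvalues.
For positive definite `D`, the columns `vᵢ` of `V` satisfy `vᵢ* A D vᵢ = μᵢ (V* D V)ᵢᵢ` with
`(V* D V)ᵢᵢ > 0`, because `vᵢ*` is a left eigenvector of `A`. Hence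
`σ = V diag(q) V*` with `qᵢ ∝ pᵢ / (V* D V)ᵢᵢ` is a density matrix with
`Tr (A D σ) ∝ ∑ pᵢ μᵢ = 0`.
-/

open Matrix
open scoped ComplexOrder ComplexStarModule

theorem ContinuousLinearMap.exists_orthonormalBasis_apply_eq_smul_of_isStarNormal
    {E : Type*} [NormedAddCommGroup E] [InnerProductSpace ℂ E] [FiniteDimensional ℂ E]
    {ι : Type*} [Fintype ι] (hι : Module.finrank ℂ E = Fintype.card ι)
    (T : E →L[ℂ] E) [IsStarNormal T] :
    ∃ (b : OrthonormalBasis ι ℂ E) (μ : ι → ℂ), ∀ i, T (b i) = μ i • b i := by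
  set R : E →ₗ[ℂ] E := ((ℜ T : E →L[ℂ] E) : E →ₗ[ℂ] E)
  set S : E →ₗ[ℂ] E := ((ℑ T : E →L[ℂ] E) : E →ₗ[ℂ] E)
  have hR : R.IsSymmetric := (ℜ T).2.isSymmetric
  have hS : S.IsSymmetric := (ℑ T).2.isSymmetric
  have hRS : Commute R S := by
    have := (Commute.realPart_imaginaryPart T).eq
    exact LinearMap.ext fun v => congr($this v)
  set V : ℂ × ℂ → Submodule ℂ E :=
    fun i => Module.End.eigenspace R i.2 ⊓ Module.End.eigenspace S i.1
  have hint₀ : DirectSum.IsInternal V := hR.directSum_isInternal_of_commute hS hRS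
  let := hint₀.submodule_iSupIndep.fintypeNeBotOfFiniteDimensional
  -- `subordinateOrthonormalBasis` needs a finite index type
  have hint : DirectSum.IsInternal fun i : {i // V i ≠ ⊥} => V i :=
    DirectSum.isInternal_ne_bot_iff.mpr hint₀
  have horth := (hR.orthogonalFamily_eigenspace_inf_eigenspace hS).comp
    (Subtype.val_injective (p := fun i => V i ≠ ⊥))
  set e := Fintype.equivFin ι
  set idx := fun i => (hint.subordinateOrthonormalBasisIndex hι (e i) horth).1
  refine ⟨(hint.subordinateOrthonormalBasis hι horth).reindex e.symm,
    fun i => (idx i).2 + Complex.I * (idx i).1, fun i => ?_⟩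
  have hmem := hint.subordinateOrthonormalBasis_subordinate hι (e i) horth
  rw [Submodule.mem_inf, Module.End.mem_eigenspace_iff, Module.End.mem_eigenspace_iff] at hmem
  rw [OrthonormalBasis.reindex_apply, Equiv.symm_symm]
  calc T _ = R _ + Complex.I • S _ := by
        conv_lhs => rw [← realPart_add_I_smul_imaginaryPart T]
        rfl
    _ = _ := by rw [hmem.1, hmem.2, add_smul, mul_smul]

theorem Matrix.exists_unitary_eq_mul_diagonal_mul_star_of_isStarNormal
    {n : Type*} [Fintype n] [DecidableEq n] (A : Matrix n n ℂ) [IsStarNormal A] :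
    ∃ V ∈ unitaryGroup n ℂ, ∃ μ : n → ℂ, A = V * diagonal μ * star V := by
  obtain ⟨b, μ, hb⟩ :=
    (toEuclideanCLM (𝕜 := ℂ) A).exists_orthonormalBasis_apply_eq_smul_of_isStarNormal
      finrank_euclideanSpace
  set V := (EuclideanSpace.basisFun n ℂ).toBasis.toMatrix b.toBasis
  have hV : V ∈ unitaryGroup n ℂ :=
    (EuclideanSpace.basisFun n ℂ).toMatrix_orthonormalBasis_mem_unitary b
  have hAV : A * V = V * diagonal μ := by
    ext i j
    rw [mul_diagonal]
    simpa [V, mul_comm, Matrix.mul_apply, Module.Basis.toMatrix_apply, mulVec, dotProduct] using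
      congr($(hb j) i)
  refine ⟨V, hV, μ, ?_⟩
  rw [← hAV, Matrix.mul_assoc, mem_unitaryGroup_iff.mp hV, Matrix.mul_one]

theorem exists_mem_stdSimplex_sum_mul_smul_eq_zero {ι E : Type*} [Fintype ι] [AddCommGroup E]
    [Module ℝ E] {p : ι → ℝ} (hp : p ∈ stdSimplex ℝ ι) {μ : ι → E} (hpμ : ∑ i, p i • μ i = 0)
    {c : ι → ℝ} (hc : ∀ i, 0 < c i) :
    ∃ q ∈ stdSimplex ℝ ι, ∑ i, (c i * q i) • μ i = 0 := by
  set N := ∑ i, p i / c i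
  have hN : 0 < N := by
    obtain ⟨i, -, hi⟩ := Finset.exists_lt_of_sum_lt (s := Finset.univ)
      (f := fun _ => (0 : ℝ)) (g := p) (by simp [hp.2])
    exact Finset.sum_pos' (fun j _ => div_nonneg (hp.1 j) (hc j).le)
      ⟨i, Finset.mem_univ _, div_pos hi (hc i)⟩
  refine ⟨fun i => p i / c i / N,
    ⟨fun i => div_nonneg (div_nonneg (hp.1 i) (hc i).le) hN.le, ?_⟩, ?_⟩
  · rw [← Finset.sum_div, div_self hN.ne']
  · calc ∑ i, (c i * (p i / c i / N)) • μ i = N⁻¹ • ∑ i, p i • μ i := by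
          rw [Finset.smul_sum]
          refine Finset.sum_congr rfl fun i _ => ?_
          rw [smul_smul]
          congr 1
          field_simp [(hc i).ne']
      _ = 0 := by rw [hpμ, smul_zero]

section

variable {𝕜 n : Type*} [RCLike 𝕜] [Fintype n] [DecidableEq n]

theorem Matrix.star_dotProduct_mul_diagonal_mul_star_mulVec (V : Matrix n n 𝕜) (μ : n → 𝕜)
    (x : n → 𝕜) :
    star x ⬝ᵥ (V * diagonal μ * star V) *ᵥ x = ∑ i, ‖(star V *ᵥ x) i‖ ^ 2 • μ i := by
  rw [← mulVec_mulVec, ← mulVec_mulVec, dotProduct_mulVec]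
  have : star x ᵥ* V = star (star V *ᵥ x) := by
    rw [star_mulVec, star_eq_conjTranspose, conjTranspose_conjTranspose]
  rw [this]
  simp only [dotProduct, mulVec_diagonal, Pi.star_apply, RCLike.star_def,
    RCLike.real_smul_eq_coe_mul]
  refine Finset.sum_congr rfl fun i _ => ?_
  rw [RCLike.ofReal_pow, ← RCLike.conj_mul]
  ring

theorem Matrix.norm_sq_star_mulVec_mem_stdSimplex {V : Matrix n n 𝕜} (hV : V ∈ unitaryGroup n 𝕜)
    {x : n → 𝕜} (hx : star x ⬝ᵥ x = 1) :
    (fun i => ‖(star V *ᵥ x) i‖ ^ 2) ∈ stdSimplex ℝ n := by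
  refine ⟨fun i => by positivity, ?_⟩
  have h := V.star_dotProduct_mul_diagonal_mul_star_mulVec (fun _ => 1) x
  rw [diagonal_one, Matrix.mul_one, mem_unitaryGroup_iff.mp hV, one_mulVec, hx] at h
  simp only [RCLike.real_smul_eq_coe_mul, mul_one] at h
  exact_mod_cast h.symm

theorem Matrix.exists_posSemidef_trace_eq_one_trace_mul_mul_eq_zero {V : Matrix n n 𝕜}
    (hV : V ∈ unitaryGroup n 𝕜) (μ : n → 𝕜) {D : Matrix n n 𝕜} (hD : D.PosDef)
    {p : n → ℝ} (hp : p ∈ stdSimplex ℝ n) (hpμ : ∑ i, p i • μ i = 0) :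
    ∃ σ : Matrix n n 𝕜, σ.PosSemidef ∧ σ.trace = 1 ∧
      (V * diagonal μ * star V * D * σ).trace = 0 := by
  set B := star V * D * V
  have hB : B.PosDef := hD.conjTranspose_mul_mul_same
    (mulVec_injective_iff_isUnit.mpr (Unitary.isUnit_coe (U := ⟨V, hV⟩)))
  obtain ⟨q, hq, hqμ⟩ := exists_mem_stdSimplex_sum_mul_smul_eq_zero hp hpμ
    (c := fun i => RCLike.re (B i i)) fun i => (RCLike.pos_iff.mp hB.diag_pos).1
  refine ⟨V * diagonal (fun i => (q i : 𝕜)) * star V, ?_, ?_, ?_⟩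
  · have hqD : (diagonal fun i => (q i : 𝕜)).PosSemidef :=
      PosSemidef.diagonal fun i => RCLike.ofReal_nonneg.mpr (hq.1 i)
    exact hqD.mul_mul_conjTranspose_same V
  · rw [trace_mul_comm, ← Matrix.mul_assoc, mem_unitaryGroup_iff'.mp hV, Matrix.one_mul,
      trace_diagonal]
    exact_mod_cast hq.2
  · have : V * diagonal μ * star V * D * (V * diagonal (fun i => (q i : 𝕜)) * star V) =
        V * (diagonal μ * B * diagonal (fun i => (q i : 𝕜))) * star V := by
      simp only [B, Matrix.mul_assoc]
    rw [this, trace_mul_comm, ← Matrix.mul_assoc, mem_unitaryGroup_iff'.mp hV, Matrix.one_mul]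
    simp only [trace, diag, mul_diagonal, diagonal_mul]
    rw [← hqμ]
    refine Finset.sum_congr rfl fun i _ => ?_
    rw [← hB.isHermitian.coe_re_apply_self i, RCLike.real_smul_eq_coe_mul]
    push_cast
    ring

end

theorem stmt18_general (d : ℕ) (U E : Matrix (Fin d) (Fin d) ℂ)
    (hU : U ∈ Matrix.unitaryGroup (Fin d) ℂ)
    (hE : E ∈ Matrix.unitaryGroup (Fin d) ℂ)
    (δ : Fin d → ℝ) (hδ : ∀ i, 0 < δ i)
    (h0 : ∃ x : Fin d → ℂ, star x ⬝ᵥ x = 1 ∧ star x ⬝ᵥ (U * E).mulVec x = 0) :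
    ∃ σ : Matrix (Fin d) (Fin d) ℂ, σ.PosSemidef ∧ σ.trace = 1 ∧
      (U * E * Matrix.diagonal (fun i => (δ i : ℂ)) * σ).trace = 0 := by
  obtain ⟨x, hx1, hx0⟩ := h0
  have : IsStarNormal (U * E) := isStarNormal_of_mem_unitary (mul_mem hU hE)
  obtain ⟨V, hV, μ, hUE⟩ := (U * E).exists_unitary_eq_mul_diagonal_mul_star_of_isStarNormal
  rw [hUE] at hx0 ⊢
  refine exists_posSemidef_trace_eq_one_trace_mul_mul_eq_zero hV μ
    (posDef_diagonal_iff.mpr fun i => ?_) (norm_sq_star_mulVec_mem_stdSimplex hV hx1) ?_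
  · exact_mod_cast hδ i
  · rw [← star_dotProduct_mul_diagonal_mul_star_mulVec, hx0]

theorem stmt18 (d : ℕ) (U E : Matrix (Fin d) (Fin d) ℂ)
    (hU : U ∈ Matrix.unitaryGroup (Fin d) ℂ)
    (hE : E ∈ Matrix.unitaryGroup (Fin d) ℂ) (hEdiag : E.IsDiag)
    (δ : Fin d → ℝ) (hδ : ∀ i, 0 < δ i)
    (h0 : ∃ x : Fin d → ℂ, star x ⬝ᵥ x = 1 ∧ star x ⬝ᵥ (U * E).mulVec x = 0) :
    ∃ σ : Matrix (Fin d) (Fin d) ℂ, σ.PosSemidef ∧ σ.trace = 1 ∧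
      (U * E * Matrix.diagonal (fun i => (δ i : ℂ)) * σ).trace = 0 :=
  stmt18_general d U E hU hE δ hδ h0
end

section
/- Let ρ be a d×d density matrix, |i⟩ the standard basis vectors, and u_i the columns of a unitary U. Then for each i, the trace norm of √ρ(|i⟩⟨i| − |u_i⟩⟨u_i|)√ρ equals √((⟨i|ρ|i⟩ + ⟨u_i|ρ|u_i⟩)² − 4|⟨i|ρ|u_i⟩|²). -/
open Matrix
open scoped ComplexOrder

/-- The positive semidefinite square root of a positive semidefinite matrix
(the definition of `Matrix.PosSemidef.sqrt` in the older Mathlib, since removed). -/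
noncomputable def Matrix.PosSemidef.sqrt {n 𝕜 : Type*} [Fintype n] [DecidableEq n] [RCLike 𝕜]
    {A : Matrix n n 𝕜} (hA : A.PosSemidef) : Matrix n n 𝕜 :=
  (hA.1.eigenvectorUnitary : Matrix n n 𝕜) *
    diagonal (fun i => ((Real.sqrt (hA.1.eigenvalues i) : ℝ) : 𝕜)) *
    (star hA.1.eigenvectorUnitary : Matrix n n 𝕜)

/-- The trace norm `‖A‖₁ = Tr √(AᴴA)` of a complex square matrix. -/
noncomputable def traceNorm {d : ℕ} (A : Matrix (Fin d) (Fin d) ℂ) : ℂ :=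
  (Matrix.posSemidef_conjTranspose_mul_self A).sqrt.trace

/-!
Write `A = √ρ (|i⟩⟨i| − |u_i⟩⟨u_i|) √ρ = v v* − w w*` with `v = √ρ |i⟩`, `w = √ρ u_i`, so that
`‖v‖² = ⟨i|ρ|i⟩`, `‖w‖² = ⟨u_i|ρ|u_i⟩` and `⟨v, w⟩ = ⟨i|ρ|u_i⟩`. Expanding with
`(v v*)² = ‖v‖² v v*` and `(v v*)(w w*)(v v*) = |⟨v, w⟩|² v v*` gives the cubic relation
`A³ = s A² + D A` with `s = ‖v‖² − ‖w‖²` and `D = ‖v‖²‖w‖² − |⟨v, w⟩|² ≥ 0` (Cauchy–Schwarz).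
Every eigenvalue `x` of `A` is therefore `0` or a root of `x² = s x + D`, and at these points
`|x| = (2x² − s x) / √(s² + 4D)`. Hence `|A| = (2A² − sA) / √(s² + 4D)`, and `tr A = s`,
`tr A² = s² + 2D` give `tr |A| = √(s² + 4D) = √((‖v‖² + ‖w‖²)² − 4|⟨v, w⟩|²)`.
-/

open scoped MatrixOrder

lemma sub_pow_three_of_mul_self_eq_smul {R A : Type*} [CommRing R] [Ring A] [Algebra R A]
    {P Q : A} {a b k : R} (hP : P * P = a • P) (hQ : Q * Q = b • Q)
    (hPQP : P * Q * P = k • P) (hQPQ : Q * P * Q = k • Q) :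
    (P - Q) ^ 3 = (a - b) • (P - Q) ^ 2 + (a * b - k) • (P - Q) := by
  have hsq : (P - Q) ^ 2 = a • P + b • Q - (P * Q + Q * P) := by
    rw [sq, sub_mul, mul_sub, mul_sub, hP, hQ]; abel
  rw [pow_succ, hsq]
  simp only [mul_sub, sub_mul, add_mul, smul_mul_assoc, hP, hQ, hPQP, hQPQ]
  rw [mul_assoc P Q Q, hQ, mul_assoc Q P P, hP, mul_smul_comm, mul_smul_comm]
  module

lemma inv_sqrt_mul_eq_abs_of_pow_three_eq {s D x : ℝ} (hD : 0 ≤ D)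
    (hx : x ^ 3 = s * x ^ 2 + D * x) :
    (√(s ^ 2 + 4 * D))⁻¹ * (2 * x ^ 2 - s * x) = |x| := by
  rcases eq_or_ne x 0 with rfl | hx0
  · simp
  have hquad : x ^ 2 = s * x + D := mul_left_cancel₀ hx0 (by linear_combination hx)
  have hsq : (2 * x - s) ^ 2 = s ^ 2 + 4 * D := by linear_combination 4 * hquad
  have hpos : 0 < x * (2 * x - s) := by nlinarith [sq_pos_of_ne_zero hx0]
  have hfactor : 2 * x ^ 2 - s * x = |x| * |2 * x - s| := by
    rw [← abs_mul, abs_of_pos hpos]; ring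
  have hne : |2 * x - s| ≠ 0 := (abs_pos.mpr (right_ne_zero_of_mul hpos.ne')).ne'
  rw [← hsq, Real.sqrt_sq_eq_abs, hfactor, mul_comm |x|, ← mul_assoc, inv_mul_cancel₀ hne, one_mul]

section CFC

variable {A : Type*} [Ring A] [StarRing A] [TopologicalSpace A] [Algebra ℝ A]
  [ContinuousFunctionalCalculus ℝ A IsSelfAdjoint]
  [PartialOrder A] [StarOrderedRing A] [NonnegSpectrumClass ℝ A]
  [IsTopologicalRing A] [T2Space A]

lemma CFC.abs_eq_of_pow_three_eq {a : A} (ha : IsSelfAdjoint a) {s D : ℝ} (hD : 0 ≤ D)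
    (h : a ^ 3 = s • a ^ 2 + D • a) :
    CFC.abs a = (√(s ^ 2 + 4 * D))⁻¹ • (2 * a ^ 2 - s • a) := by
  have hcubic : cfc (fun x : ℝ => x ^ 3) a = cfc (fun x : ℝ => s * x ^ 2 + D * x) a := by
    rw [cfc_add .., cfc_const_mul .., cfc_const_mul .., cfc_pow_id .., cfc_pow_id .., cfc_id' ..]
    simpa using h
  have hspec := eqOn_of_cfc_eq_cfc hcubic
  simp_rw [CFC.abs_eq_cfc_norm a, Real.norm_eq_abs]
  rw [← cfc_congr fun x hx => inv_sqrt_mul_eq_abs_of_pow_three_eq hD (hspec hx),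
    cfc_const_mul .., cfc_sub .., cfc_const_mul .., cfc_const_mul .., cfc_pow_id .., cfc_id' ..,
    two_smul, two_mul]

end CFC

namespace Matrix

variable {𝕜 n : Type*} [RCLike 𝕜]

lemma isHermitian_vecMulVec_star (v : n → 𝕜) : (vecMulVec v (star v)).IsHermitian := by
  rw [IsHermitian, conjTranspose_vecMulVec, star_star]

variable [Fintype n]

lemma ofReal_re_star_dotProduct_self (v : n → 𝕜) :
    ((RCLike.re (star v ⬝ᵥ v) : ℝ) : 𝕜) = star v ⬝ᵥ v :=
  RCLike.conj_eq_iff_re.mp (star_dotProduct v v).symm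

lemma star_dotProduct_mul_star_dotProduct (v w : n → 𝕜) :
    (star v ⬝ᵥ w) * (star w ⬝ᵥ v) = ((‖star v ⬝ᵥ w‖ ^ 2 : ℝ) : 𝕜) := by
  rw [star_dotProduct w v, RCLike.star_def, RCLike.mul_conj, RCLike.ofReal_pow]

lemma norm_star_dotProduct_sq_le (v w : n → 𝕜) :
    ‖star v ⬝ᵥ w‖ ^ 2 ≤ RCLike.re (star v ⬝ᵥ v) * RCLike.re (star w ⬝ᵥ w) := by
  have := inner_mul_inner_self_le (𝕜 := 𝕜) (WithLp.toLp 2 v) (WithLp.toLp 2 w)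
  simp only [EuclideanSpace.inner_toLp_toLp, dotProduct_comm _ (star _)] at this
  rwa [star_dotProduct w v, norm_star, ← sq] at this

lemma vecMulVec_star_mul_self (v : n → 𝕜) :
    vecMulVec v (star v) * vecMulVec v (star v) = (star v ⬝ᵥ v) • vecMulVec v (star v) := by
  rw [vecMulVec_mul_vecMulVec, vecMulVec_smul]

lemma vecMulVec_star_mul_mul (v w : n → 𝕜) :
    vecMulVec v (star v) * vecMulVec w (star w) * vecMulVec v (star v)
      = ((star v ⬝ᵥ w) * (star w ⬝ᵥ v)) • vecMulVec v (star v) := by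
  rw [vecMulVec_mul_vecMulVec, vecMulVec_mul_vecMulVec, smul_dotProduct, smul_eq_mul,
    vecMulVec_smul]

lemma trace_vecMulVec_star_mul (v w : n → 𝕜) :
    (vecMulVec v (star v) * vecMulVec w (star w)).trace = (star v ⬝ᵥ w) * (star w ⬝ᵥ v) := by
  rw [vecMulVec_mul_vecMulVec, trace_vecMulVec, dotProduct_smul, smul_eq_mul, dotProduct_comm v]

lemma mul_vecMulVec_star_mul {M : Matrix n n 𝕜} (hM : M.IsHermitian) (x : n → 𝕜) :
    M * vecMulVec x (star x) * M = vecMulVec (M *ᵥ x) (star (M *ᵥ x)) := by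
  rw [mul_vecMulVec, vecMulVec_mul, star_mulVec, hM.eq]

lemma star_mulVec_dotProduct_mulVec {M : Matrix n n 𝕜} (hM : M.IsHermitian) (x y : n → 𝕜) :
    star (M *ᵥ x) ⬝ᵥ (M *ᵥ y) = star x ⬝ᵥ ((M * M) *ᵥ y) := by
  rw [star_mulVec, hM.eq, dotProduct_mulVec, vecMul_vecMul, ← dotProduct_mulVec]

variable [DecidableEq n]

lemma PosSemidef.sqrt_eq_cfcSqrt {A : Matrix n n 𝕜} (hA : A.PosSemidef) :
    hA.sqrt = CFC.sqrt A := by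
  rw [CFC.sqrt_eq_real_sqrt A hA.nonneg, cfcₙ_eq_cfc, hA.1.cfc_eq]
  rfl

lemma IsHermitian.trace_cfcAbs_of_pow_three_eq {A : Matrix n n 𝕜} (hA : A.IsHermitian)
    {s D : ℝ} (hD : 0 ≤ D) (h : A ^ 3 = s • A ^ 2 + D • A) (htr : A.trace = s)
    (htr_sq : (A ^ 2).trace = (s ^ 2 + 2 * D : ℝ)) :
    (CFC.abs A).trace = (√(s ^ 2 + 4 * D) : 𝕜) := by
  have hdiv : (√(s ^ 2 + 4 * D))⁻¹ * ((s ^ 2 + 2 * D) + (s ^ 2 + 2 * D) - s * s)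
      = √(s ^ 2 + 4 * D) := by
    rw [show (s ^ 2 + 2 * D) + (s ^ 2 + 2 * D) - s * s = s ^ 2 + 4 * D by ring, inv_mul_eq_div,
      Real.div_sqrt]
  rw [CFC.abs_eq_of_pow_three_eq hA.isSelfAdjoint hD h, trace_smul, trace_sub, trace_smul,
    two_mul, trace_add, htr, htr_sq, RCLike.real_smul_eq_coe_smul (K := 𝕜),
    RCLike.real_smul_eq_coe_smul (K := 𝕜), smul_eq_mul, smul_eq_mul]
  exact_mod_cast congrArg (fun x : ℝ => (x : 𝕜)) hdiv

theorem trace_cfcAbs_vecMulVec_sub_vecMulVec (v w : n → 𝕜) :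
    (CFC.abs (vecMulVec v (star v) - vecMulVec w (star w))).trace
      = (√((RCLike.re (star v ⬝ᵥ v) + RCLike.re (star w ⬝ᵥ w)) ^ 2
          - 4 * ‖star v ⬝ᵥ w‖ ^ 2) : 𝕜) := by
  set P := vecMulVec v (star v)
  set Q := vecMulVec w (star w)
  set a := RCLike.re (star v ⬝ᵥ v)
  set b := RCLike.re (star w ⬝ᵥ w)
  set k := ‖star v ⬝ᵥ w‖ ^ 2
  have ha : star v ⬝ᵥ v = (a : 𝕜) := (ofReal_re_star_dotProduct_self v).symm
  have hb : star w ⬝ᵥ w = (b : 𝕜) := (ofReal_re_star_dotProduct_self w).symm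
  have hk : (star v ⬝ᵥ w) * (star w ⬝ᵥ v) = (k : 𝕜) := star_dotProduct_mul_star_dotProduct v w
  have hcubic := sub_pow_three_of_mul_self_eq_smul (vecMulVec_star_mul_self v)
    (vecMulVec_star_mul_self w) (vecMulVec_star_mul_mul v w)
    (by rw [vecMulVec_star_mul_mul w v, mul_comm])
  rw [ha, hb, hk, ← RCLike.ofReal_sub, ← RCLike.ofReal_mul, ← RCLike.ofReal_sub,
    ← RCLike.real_smul_eq_coe_smul, ← RCLike.real_smul_eq_coe_smul] at hcubic
  have htr : (P - Q).trace = (a - b : ℝ) := by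
    simp only [P, Q, trace_sub, trace_vecMulVec, dotProduct_comm _ (star _), ha, hb,
      RCLike.ofReal_sub]
  have htr_sq : ((P - Q) ^ 2).trace = ((a - b) ^ 2 + 2 * (a * b - k) : ℝ) := by
    rw [sq, sub_mul, mul_sub, mul_sub, trace_sub, trace_sub, trace_sub, trace_mul_comm Q P]
    simp only [P, Q, trace_vecMulVec_star_mul, ha, hb, hk]
    push_cast
    ring
  have hD : 0 ≤ a * b - k := sub_nonneg.mpr (norm_star_dotProduct_sq_le v w)
  have hherm := (isHermitian_vecMulVec_star v).sub (isHermitian_vecMulVec_star w)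
  rw [hherm.trace_cfcAbs_of_pow_three_eq hD hcubic htr htr_sq,
    show (a - b) ^ 2 + 4 * (a * b - k) = (a + b) ^ 2 - 4 * k by ring]

end Matrix

lemma traceNorm_eq_trace_cfcAbs {d : ℕ} (A : Matrix (Fin d) (Fin d) ℂ) :
    traceNorm A = (CFC.abs A).trace := by
  rw [traceNorm, PosSemidef.sqrt_eq_cfcSqrt]
  rfl

theorem stmt19_general (d : ℕ) (ρ : Matrix (Fin d) (Fin d) ℂ)
    (hρ : ρ.PosSemidef)
    (U : Matrix (Fin d) (Fin d) ℂ) :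
    ∀ i : Fin d,
      traceNorm (hρ.sqrt *
          (Matrix.single i i (1 : ℂ) -
            Matrix.vecMulVec (fun k => U k i) (star (fun k => U k i))) * hρ.sqrt)
        = (Real.sqrt ((((ρ i i).re +
              (star (fun k => U k i) ⬝ᵥ ρ.mulVec (fun k => U k i)).re) ^ 2)
            - 4 * ‖ρ.mulVec (fun k => U k i) i‖ ^ 2) : ℝ) := by
  intro i
  set e : Fin d → ℂ := Pi.single i 1
  have hse : star e = e := by rw [← Pi.single_star, star_one]
  have hsa : hρ.sqrt.IsHermitian := by
    rw [hρ.sqrt_eq_cfcSqrt]; exact (CFC.sqrt_nonneg ρ).isSelfAdjoint.isHermitian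
  have hsq : hρ.sqrt * hρ.sqrt = ρ := hρ.sqrt_eq_cfcSqrt ▸ CFC.sqrt_mul_sqrt_self ρ hρ.nonneg
  have hsingle : Matrix.single i i (1 : ℂ) = vecMulVec e (star e) := by
    rw [hse, single_eq_single_vecMulVec_single]
  rw [hsingle, mul_sub, sub_mul, mul_vecMulVec_star_mul hsa, mul_vecMulVec_star_mul hsa,
    traceNorm_eq_trace_cfcAbs, trace_cfcAbs_vecMulVec_sub_vecMulVec,
    star_mulVec_dotProduct_mulVec hsa, star_mulVec_dotProduct_mulVec hsa,
    star_mulVec_dotProduct_mulVec hsa, hsq, hse, single_dotProduct, single_dotProduct,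
    mulVec_single_one, one_mul, one_mul]
  rfl

theorem stmt19 (d : ℕ) (ρ : Matrix (Fin d) (Fin d) ℂ)
    (hρ : ρ.PosSemidef) (hρtr : ρ.trace = 1)
    (U : Matrix (Fin d) (Fin d) ℂ) (hU : U ∈ Matrix.unitaryGroup (Fin d) ℂ) :
    ∀ i : Fin d,
      traceNorm (hρ.sqrt *
          (Matrix.single i i (1 : ℂ) -
            Matrix.vecMulVec (fun k => U k i) (star (fun k => U k i))) * hρ.sqrt)
        = (Real.sqrt ((((ρ i i).re +
              (star (fun k => U k i) ⬝ᵥ ρ.mulVec (fun k => U k i)).re) ^ 2)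
            - 4 * ‖ρ.mulVec (fun k => U k i) i‖ ^ 2) : ℝ) :=
  stmt19_general d ρ hρ U
end
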